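/- arXiv:2506.12648 — 11 statements merged into one kernel-verified Lean document; each statement's English description precedes it below -/
import Mathlib

section
/- Let f : ℝ^d → ℝ be differentiable, glocally (L, L_*, δ)-smooth, and μ-strongly convex with minimum value f_*. Let w₀ ∈ ℝ^d, set Δ₀ = f(w₀) − f_*, and assume Δ₀ > δ > ε > 0. Let (w_t) be gradient-descent iterates w_{t+1} = w_t − η_t∇f(w_t) with each η_t chosen by exact line optimization. Then f(w_T) − f_* ≤ ε for every natural number T with T ≥ ⌈(L/μ)log(Δ₀/δ)⌉ + ⌈(L_*/μ)log(δ/ε)⌉. -/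
/-!
Exact line search does at least as well as the gradient step of length `1 / L`, which by the
descent lemma and the Polyak–Łojasiewicz inequality contracts the gap `f - f_*` by the factor
`1 - μ / L`. After `(L / μ) log (Δ₀ / δ)` steps the iterates therefore enter the sublevel set
`{f - f_* ≤ δ}`, and they stay there because `f (w t)` decreases. From a point `u` of that set
the whole segment `[u, u - ∇f u / L_*]` stays in it, so the step of length `1 / L_*` obeys the
descent lemma with the local constant `L_*`, and the gap now contracts by `1 - μ / L_*`.
-/

open scoped RealInnerProductSpace
open Set Real

section GradientStep

variable {E : Type*} [NormedAddCommGroup E] [InnerProductSpace ℝ E] {f : E → ℝ} {f' : E → E}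
  {μ : ℝ}

lemma norm_sub_smul_sub_self (u g : E) {s : ℝ} (hs : 0 ≤ s) : ‖u - s • g - u‖ = s * ‖g‖ := by
  rw [sub_sub_cancel_left, norm_neg, norm_smul, Real.norm_eq_abs, abs_of_nonneg hs]

/-- The Polyak–Łojasiewicz inequality, from `0 ≤ ‖∇f u + μ (w - u)‖²`. -/
lemma two_mul_sub_le_norm_sq (hμ : 0 ≤ μ)
    (hsc : ∀ u v, f v ≥ f u + ⟪f' u, v - u⟫ + μ / 2 * ‖v - u‖ ^ 2) (u w : E) :
    2 * μ * (f u - f w) ≤ ‖f' u‖ ^ 2 := by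
  have hsq := sq_nonneg ‖f' u + μ • (w - u)‖
  rw [norm_add_sq_real, real_inner_smul_right, norm_smul, Real.norm_eq_abs, mul_pow, sq_abs]
    at hsq
  nlinarith [mul_le_mul_of_nonneg_left (hsc u w) hμ]

lemma sub_le_one_sub_mul_of_le_sub_norm_sq (hμ : 0 ≤ μ)
    (hsc : ∀ u v, f v ≥ f u + ⟪f' u, v - u⟫ + μ / 2 * ‖v - u‖ ^ 2) {C : ℝ} (hC : 0 < C)
    {u v : E} (w : E) (hv : f v ≤ f u - C⁻¹ / 2 * ‖f' u‖ ^ 2) :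
    f v - f w ≤ (1 - μ / C) * (f u - f w) := by
  have hPL := mul_le_mul_of_nonneg_left (two_mul_sub_le_norm_sq hμ hsc u w)
    (by positivity : 0 ≤ C⁻¹ / 2)
  have : μ / C * (f u - f w) = C⁻¹ / 2 * (2 * μ * (f u - f w)) := by ring
  nlinarith

variable [CompleteSpace E]

lemma HasGradientAt.hasDerivAt_comp_add_smul {u d : E} {s : ℝ}
    (h : HasGradientAt f (f' (u + s • d)) (u + s • d)) :
    HasDerivAt (fun s : ℝ => f (u + s • d)) ⟪f' (u + s • d), d⟫ s := by
  have hline : HasDerivAt (fun s : ℝ => u + s • d) d s := by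
    simpa using ((hasDerivAt_id s).smul_const d).const_add u
  simpa [InnerProductSpace.toDual_apply_apply, Function.comp_def] using
    h.hasFDerivAt.comp_hasDerivAt s hline

lemma le_add_inner_add_sq_of_lipschitz_on_segment (hf : ∀ x, HasGradientAt f (f' x) x)
    {u v : E} {C : ℝ} (hC : ∀ x ∈ segment ℝ u v, ‖f' x - f' u‖ ≤ C * ‖x - u‖) :
    f v ≤ f u + ⟪f' u, v - u⟫ + C / 2 * ‖v - u‖ ^ 2 := by
  set d := v - u
  set g : ℝ → ℝ := fun s => f (u + s • d) - s * ⟪f' u, d⟫ - C / 2 * s ^ 2 * ‖d‖ ^ 2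
  have hg : ∀ s, HasDerivAt g (⟪f' (u + s • d) - f' u, d⟫ - C * s * ‖d‖ ^ 2) s := by
    intro s
    refine ((((hf (u + s • d)).hasDerivAt_comp_add_smul).sub
      ((hasDerivAt_id s).mul_const ⟪f' u, d⟫)).sub
      (((hasDerivAt_pow 2 s).const_mul (C / 2)).mul_const (‖d‖ ^ 2))).congr_deriv ?_
    rw [inner_sub_left]; push_cast; ring
  have hg_nonpos : ∀ s ∈ Icc (0 : ℝ) 1, ⟪f' (u + s • d) - f' u, d⟫ - C * s * ‖d‖ ^ 2 ≤ 0 := by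
    intro s hs
    have hmem : u + s • d ∈ segment ℝ u v := by
      rw [segment_eq_image']; exact ⟨s, hs, rfl⟩
    have hlip := hC _ hmem
    rw [add_sub_cancel_left, norm_smul, Real.norm_eq_abs, abs_of_nonneg hs.1] at hlip
    nlinarith [real_inner_le_norm (f' (u + s • d) - f' u) d, norm_nonneg d]
  have hanti : AntitoneOn g (Icc 0 1) :=
    antitoneOn_of_hasDerivWithinAt_nonpos (convex_Icc 0 1)
      (fun s _ => (hg s).continuousAt.continuousWithinAt)
      (fun s _ => (hg s).hasDerivWithinAt)
      (fun s hs => hg_nonpos s (interior_subset hs))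
  have := hanti (left_mem_Icc.2 zero_le_one) (right_mem_Icc.2 zero_le_one) zero_le_one
  simp only [g, d, zero_smul, add_zero, one_smul, add_sub_cancel] at this
  linarith

lemma le_sub_of_gradient_step (hf : ∀ x, HasGradientAt f (f' x) x) {u : E} {C η : ℝ}
    (hη : 0 ≤ η) (hCη : C * η ≤ 1)
    (hC : ∀ s ∈ Icc 0 η, ‖f' (u - s • f' u) - f' u‖ ≤ C * (s * ‖f' u‖)) :
    f (u - η • f' u) ≤ f u - η / 2 * ‖f' u‖ ^ 2 := by
  have hseg : ∀ x ∈ segment ℝ u (u - η • f' u), ‖f' x - f' u‖ ≤ C * ‖x - u‖ := by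
    rw [segment_eq_image']
    rintro _ ⟨θ, hθ, rfl⟩
    have hx : u + θ • (u - η • f' u - u) = u - (θ * η) • f' u := by module
    have hθη : 0 ≤ θ * η := mul_nonneg hθ.1 hη
    simp only [hx, norm_sub_smul_sub_self u _ hθη]
    exact hC _ ⟨hθη, mul_le_of_le_one_left hη hθ.2⟩
  have h := le_add_inner_add_sq_of_lipschitz_on_segment hf hseg
  rw [sub_sub_cancel_left, inner_neg_right, real_inner_smul_right, real_inner_self_eq_norm_sq,
    norm_neg, norm_smul, Real.norm_eq_abs, abs_of_nonneg hη] at h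
  nlinarith [sq_nonneg ‖f' u‖, mul_nonneg hη (sq_nonneg ‖f' u‖)]

lemma le_sub_of_gradient_step_of_lipschitz (hf : ∀ x, HasGradientAt f (f' x) x) {L : ℝ}
    (hglob : ∀ x y, ‖f' x - f' y‖ ≤ L * ‖x - y‖) (u : E) {η : ℝ} (hη : 0 ≤ η)
    (hLη : L * η ≤ 1) : f (u - η • f' u) ≤ f u - η / 2 * ‖f' u‖ ^ 2 :=
  le_sub_of_gradient_step hf hη hLη fun _ hs =>
    norm_sub_smul_sub_self u (f' u) hs.1 ▸ hglob _ _

/-- If `f (u - η ∇f u) > f u`, then, since a step of length `≤ 1 / L` decreases `f`, the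
intermediate value theorem gives `η₀ ∈ (0, η]` with `f (u - η₀ ∇f u) = f u`. Local smoothness
between these two points of the sublevel set gives `⟪∇f (u - η₀ ∇f u), ∇f u⟫ ≥ 0`, while strong
convexity forces it to be `≤ -μ η₀ / 2 * ‖∇f u‖²`. -/
lemma le_of_mem_Icc_of_lipschitz_on_sublevel (hf : ∀ x, HasGradientAt f (f' x) x)
    (hμ : 0 < μ) (hsc : ∀ u v, f v ≥ f u + ⟪f' u, v - u⟫ + μ / 2 * ‖v - u‖ ^ 2)
    {L Ls c : ℝ} (hL : 0 < L) (hglob : ∀ x y, ‖f' x - f' y‖ ≤ L * ‖x - y‖)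
    (hloc : ∀ x y, f x ≤ c → f y ≤ c → ‖f' x - f' y‖ ≤ Ls * ‖x - y‖)
    {u : E} (hu : f u ≤ c) {η : ℝ} (hη : η ∈ Icc 0 Ls⁻¹) : f (u - η • f' u) ≤ f u := by
  obtain ⟨hη0, hηLs⟩ := hη
  by_contra! hlt
  set g := f' u
  have hcont : Continuous fun s : ℝ => f (u - s • g) :=
    (continuous_iff_continuousAt.2 fun x => (hf x).differentiableAt.continuousAt).comp
      (by fun_prop)
  have hηpos : 0 < η := hη0.lt_of_ne (by rintro rfl; simp at hlt)
  have hshort : f (u - min η L⁻¹ • g) ≤ f u := by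
    have := le_sub_of_gradient_step_of_lipschitz hf hglob u (η := min η L⁻¹) (by positivity)
      (by rw [← le_div_iff₀' hL, one_div]; exact min_le_right _ _)
    nlinarith [sq_nonneg ‖g‖, (by positivity : 0 ≤ min η L⁻¹)]
  obtain ⟨η₀, ⟨hη₀short, hη₀η⟩, hη₀eq⟩ :=
    intermediate_value_Icc (min_le_left η L⁻¹) hcont.continuousOn ⟨hshort, hlt.le⟩
  simp only at hη₀eq
  have hη₀pos : 0 < η₀ := (lt_min hηpos (inv_pos.2 hL)).trans_le hη₀short
  have hLs : 0 ≤ Ls := inv_nonneg.1 (hη0.trans hηLs)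
  have hLsη₀ : Ls * η₀ ≤ 1 :=
    (mul_le_mul_of_nonneg_left (hη₀η.trans hηLs) hLs).trans mul_inv_le_one
  have hlip := hloc _ u (hη₀eq ▸ hu) hu
  rw [norm_sub_smul_sub_self u g hη₀pos.le] at hlip
  have hinner_nonneg : 0 ≤ ⟪f' (u - η₀ • g), g⟫ := by
    have hcs := real_inner_le_norm (f' (u - η₀ • g) - g) (-g)
    rw [inner_neg_right, inner_sub_left, real_inner_self_eq_norm_sq, norm_neg] at hcs
    nlinarith [norm_nonneg g, sq_nonneg ‖g‖]
  have hsc₀ := hsc (u - η₀ • g) u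
  rw [hη₀eq, sub_sub_cancel, real_inner_smul_right, norm_smul, Real.norm_eq_abs,
    abs_of_pos hη₀pos] at hsc₀
  have hg : g = 0 := by
    have : μ / 2 * (η₀ * ‖g‖) ^ 2 ≤ 0 := by nlinarith [mul_nonneg hη₀pos.le hinner_nonneg]
    have : (η₀ * ‖g‖) ^ 2 = 0 := le_antisymm
      (nonpos_of_mul_nonpos_right this (by positivity)) (sq_nonneg _)
    simpa [hη₀pos.ne'] using this
  simp [hg] at hlt

lemma le_sub_of_gradient_step_of_lipschitz_on_sublevel (hf : ∀ x, HasGradientAt f (f' x) x)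
    (hμ : 0 < μ) (hsc : ∀ u v, f v ≥ f u + ⟪f' u, v - u⟫ + μ / 2 * ‖v - u‖ ^ 2)
    {L Ls c : ℝ} (hL : 0 < L) (hLs : 0 < Ls) (hglob : ∀ x y, ‖f' x - f' y‖ ≤ L * ‖x - y‖)
    (hloc : ∀ x y, f x ≤ c → f y ≤ c → ‖f' x - f' y‖ ≤ Ls * ‖x - y‖) {u : E} (hu : f u ≤ c) :
    f (u - Ls⁻¹ • f' u) ≤ f u - Ls⁻¹ / 2 * ‖f' u‖ ^ 2 :=
  le_sub_of_gradient_step hf (inv_nonneg.2 hLs.le) (mul_inv_cancel₀ hLs.ne').le fun _ hs =>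
    norm_sub_smul_sub_self u (f' u) hs.1 ▸ hloc _ _
      ((le_of_mem_Icc_of_lipschitz_on_sublevel hf hμ hsc hL hglob hloc hu hs).trans hu) hu

end GradientStep

lemma le_of_contraction {Δ : ℕ → ℝ} {μ C D e : ℝ} (hμ : 0 < μ) (hC : 0 < C) (he : 0 < e)
    (hnn : ∀ t, 0 ≤ Δ t) (hstep : ∀ t, Δ (t + 1) ≤ (1 - μ / C) * Δ t) (hD : Δ 0 ≤ D)
    {t : ℕ} (ht : C / μ * log (D / e) ≤ t) : Δ t ≤ e := by
  have hdecay : ∀ t : ℕ, Δ t ≤ exp (-(μ / C * t)) * Δ 0 := by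
    intro t
    induction t with
    | zero => simp
    | succ t ih =>
      calc Δ (t + 1) ≤ (1 - μ / C) * Δ t := hstep t
        _ ≤ exp (-(μ / C)) * Δ t :=
          mul_le_mul_of_nonneg_right (by linarith [add_one_le_exp (-(μ / C))]) (hnn t)
        _ ≤ exp (-(μ / C)) * (exp (-(μ / C * t)) * Δ 0) :=
          mul_le_mul_of_nonneg_left ih (exp_pos _).le
        _ = exp (-(μ / C * ↑(t + 1))) * Δ 0 := by
          rw [← mul_assoc, ← exp_add]; push_cast; ring_nf
  have hΔt := (hdecay t).trans (mul_le_mul_of_nonneg_left hD (exp_pos _).le)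
  rcases le_or_gt D 0 with hD0 | hD0
  · nlinarith [exp_pos (-(μ / C * t))]
  have hlog : log (D / e) ≤ μ / C * t :=
    calc log (D / e) = μ / C * (C / μ * log (D / e)) := by field_simp
      _ ≤ μ / C * t := by gcongr
  have hexp : exp (-(μ / C * t)) ≤ e / D := by
    calc exp (-(μ / C * t)) ≤ exp (-log (D / e)) := exp_le_exp.2 (neg_le_neg hlog)
      _ = e / D := by rw [exp_neg, exp_log (div_pos hD0 he), inv_div]
  calc Δ t ≤ e / D * D := hΔt.trans (mul_le_mul_of_nonneg_right hexp hD0.le)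
    _ = e := div_mul_cancel₀ e hD0.ne'

lemma exists_add_eq_of_ceil_add_ceil_le {x y : ℝ} (hx : 0 ≤ x) (hy : 0 ≤ y) {T : ℕ}
    (h : ⌈x⌉ + ⌈y⌉ ≤ (T : ℤ)) : ∃ m n : ℕ, m + n = T ∧ x ≤ m ∧ y ≤ n := by
  rw [← Int.natCast_ceil_eq_ceil hx, ← Int.natCast_ceil_eq_ceil hy] at h
  refine ⟨⌈x⌉₊, T - ⌈x⌉₊, by omega, Nat.le_ceil x, (Nat.le_ceil y).trans ?_⟩
  exact_mod_cast (by omega : ⌈y⌉₊ ≤ T - ⌈x⌉₊)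

/-- Iteration complexity of gradient descent with exact line optimization
under glocal (L, L_*, δ)-smoothness and μ-strong convexity. -/
theorem gd_lo_glocal_complexity {d : ℕ}
    (f : EuclideanSpace ℝ (Fin d) → ℝ)
    (f' : EuclideanSpace ℝ (Fin d) → EuclideanSpace ℝ (Fin d))
    (L Ls δ ε μ fstar : ℝ)
    (hL : 0 < L) (hLs : 0 < Ls) (hμ : 0 < μ)
    (hdiff : ∀ x, HasGradientAt f (f' x) x)
    (hglob : ∀ u v, ‖f' u - f' v‖ ≤ L * ‖u - v‖)
    (hloc : ∀ u v, f u - fstar ≤ δ → f v - fstar ≤ δ → ‖f' u - f' v‖ ≤ Ls * ‖u - v‖)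
    (hsc : ∀ u v, f v ≥ f u + ⟪f' u, v - u⟫ + μ / 2 * ‖v - u‖ ^ 2)
    (hmin : ∃ wstar, f wstar = fstar ∧ ∀ x, fstar ≤ f x)
    (w : ℕ → EuclideanSpace ℝ (Fin d))
    (hΔδ : f (w 0) - fstar > δ) (hδε : δ > ε) (hε : ε > 0)
    (hstep : ∀ t : ℕ,
      (∃ η : ℝ, w (t + 1) = w t - η • f' (w t)) ∧
        ∀ η : ℝ, f (w (t + 1)) ≤ f (w t - η • f' (w t))) :
    ∀ T : ℕ,
      (⌈L / μ * Real.log ((f (w 0) - fstar) / δ)⌉ + ⌈Ls / μ * Real.log (δ / ε)⌉ : ℤ) ≤ T →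
      f (w T) - fstar ≤ ε := by
  obtain ⟨wstar, rfl, hmin⟩ := hmin
  have hδ : 0 < δ := hε.trans hδε
  have hnn : ∀ t, 0 ≤ f (w t) - f wstar := fun t => sub_nonneg.2 (hmin _)
  have hanti : Antitone fun t => f (w t) :=
    antitone_nat_of_succ_le fun t => by simpa using (hstep t).2 0
  have hglobal : ∀ t, f (w (t + 1)) - f wstar ≤ (1 - μ / L) * (f (w t) - f wstar) := fun t =>
    sub_le_one_sub_mul_of_le_sub_norm_sq hμ.le hsc hL wstar <| ((hstep t).2 _).trans <|
      le_sub_of_gradient_step_of_lipschitz hdiff hglob (w t) (inv_nonneg.2 hL.le)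
        (mul_inv_cancel₀ hL.ne').le
  have hlocal : ∀ t, f (w t) - f wstar ≤ δ →
      f (w (t + 1)) - f wstar ≤ (1 - μ / Ls) * (f (w t) - f wstar) := fun t ht =>
    sub_le_one_sub_mul_of_le_sub_norm_sq hμ.le hsc hLs wstar <| ((hstep t).2 _).trans <|
      le_sub_of_gradient_step_of_lipschitz_on_sublevel hdiff hμ hsc hL hLs hglob
        (c := f wstar + δ) (fun u v hu hv => hloc u v (by linarith) (by linarith))
        (by linarith)
  intro T hT
  obtain ⟨T₁, T₂, rfl, hT₁, hT₂⟩ := exists_add_eq_of_ceil_add_ceil_le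
    (mul_nonneg (div_pos hL hμ).le (log_nonneg ((one_le_div hδ).2 hΔδ.le)))
    (mul_nonneg (div_pos hLs hμ).le (log_nonneg ((one_le_div hε).2 hδε.le))) hT
  have hphase₁ : f (w T₁) - f wstar ≤ δ := le_of_contraction hμ hL hδ hnn hglobal le_rfl hT₁
  have hsublevel : ∀ k, f (w (T₁ + k)) - f wstar ≤ δ := fun k =>
    (sub_le_sub_right (hanti (Nat.le_add_right _ _)) _).trans hphase₁
  exact le_of_contraction (Δ := fun k => f (w (T₁ + k)) - f wstar) hμ hLs hε (fun _ => hnn _)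
    (fun k => hlocal _ (hsublevel k)) hphase₁ hT₂
end

section
/- Let f : ℝ^d → ℝ be differentiable and glocally (L, L_*, δ)-smooth with infimum f_*. Suppose w_t ∈ ℝ^d satisfies f(w_t) − f_* ≤ δ, and d ∈ ℝ^d is a descent direction for f at w_t, i.e. ⟨∇f(w_t), d⟩ < 0. Then for any step size η_* ≥ 0 with η_*‖d‖² ≤ (1/L_*)|⟨∇f(w_t), d⟩|, the point w_t + η_* d satisfies f(w_t + η_* d) − f_* ≤ δ. -/
open scoped RealInnerProductSpace

/-!
Restrict `f` to the ray `t ↦ w + t • v`. While the ray stays in the sublevel set `{f ≤ f w}`,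
the `L_*`-Lipschitz bound on the gradient gives
`⟪∇f(w + t v), v⟫ ≤ ⟪∇f(w), v⟫ + L_* t ‖v‖² < 0` for `t < η`, so the restriction is strictly
decreasing whenever it touches the level `f w`. A fencing argument for the first time the
restriction could exceed `f w` shows that it never does on `[0, η]`.
-/

variable {E : Type*} [NormedAddCommGroup E] [InnerProductSpace ℝ E]

theorem HasGradientAt.hasDerivAt_comp_add_smul_s2 [CompleteSpace E] {f : E → ℝ} {g w v : E}
    {t : ℝ} (hf : HasGradientAt f g (w + t • v)) :
    HasDerivAt (fun s : ℝ => f (w + s • v)) ⟪g, v⟫ t := by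
  have hline : HasDerivAt (fun s : ℝ => w + s • v) v t := by
    simpa using ((hasDerivAt_id t).smul_const v).const_add w
  have hcomp := hf.hasFDerivAt.comp_hasDerivAt t hline
  simp only [InnerProductSpace.toDual_apply_apply] at hcomp
  exact hcomp

theorem real_inner_le_real_inner_add_of_norm_sub_le {a b v : E} {K : ℝ} (h : ‖a - b‖ ≤ K) :
    ⟪a, v⟫ ≤ ⟪b, v⟫ + K * ‖v‖ := by
  have hcs : ⟪a - b, v⟫ ≤ ‖a - b‖ * ‖v‖ := real_inner_le_norm _ _
  rw [inner_sub_left] at hcs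
  nlinarith [norm_nonneg v]

theorem apply_add_smul_le_of_short_descent_step [CompleteSpace E] {f : E → ℝ} {f' : E → E}
    {Ls η : ℝ} {w v : E} (hLs : 0 < Ls) (hf : ∀ x, HasGradientAt f (f' x) x)
    (hlip : ∀ u, f u ≤ f w → ‖f' u - f' w‖ ≤ Ls * ‖u - w‖)
    (hdesc : ⟪f' w, v⟫ < 0) (hη : 0 ≤ η) (hstep : η * ‖v‖ ^ 2 ≤ 1 / Ls * |⟪f' w, v⟫|) :
    f (w + η • v) ≤ f w := by
  have hv : 0 < ‖v‖ := norm_pos_iff.2 fun hv => by simp [hv] at hdesc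
  have hstep' : Ls * (η * ‖v‖ ^ 2) ≤ -⟪f' w, v⟫ := by
    rwa [one_div_mul_eq_div, le_div_iff₀' hLs, abs_of_neg hdesc] at hstep
  have hderiv (t : ℝ) : HasDerivAt (fun s : ℝ => f (w + s • v)) ⟪f' (w + t • v), v⟫ t :=
    (hf _).hasDerivAt_comp_add_smul_s2
  have hslope : ∀ t ∈ Set.Ico 0 η, f (w + t • v) = f w → ⟪f' (w + t • v), v⟫ < 0 := by
    rintro t ⟨ht0, htη⟩ hft
    have hgrad : ‖f' (w + t • v) - f' w‖ ≤ Ls * (t * ‖v‖) := by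
      simpa [norm_smul, abs_of_nonneg ht0] using hlip _ hft.le
    have hshorter : Ls * (t * ‖v‖) * ‖v‖ < Ls * (η * ‖v‖ ^ 2) := by
      have := mul_lt_mul_of_pos_right htη (pow_pos hv 2)
      nlinarith
    linarith [real_inner_le_real_inner_add_of_norm_sub_le (v := v) hgrad]
  have hfence := image_le_of_deriv_right_lt_deriv_boundary
    (fun t _ => (hderiv t).continuousAt.continuousWithinAt)
    (fun t _ => (hderiv t).hasDerivWithinAt) (B := fun _ => f w) (B' := fun _ => 0)
    (by simp) (fun _ => hasDerivAt_const _ _) hslope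
  exact hfence ⟨hη, le_rfl⟩

theorem descent_step_stays_in_sublevel_general {d : ℕ}
    (f : EuclideanSpace ℝ (Fin d) → ℝ)
    (f' : EuclideanSpace ℝ (Fin d) → EuclideanSpace ℝ (Fin d))
    (Ls δ fstar : ℝ) (hLs : 0 < Ls)
    (hdiff : ∀ x, HasGradientAt f (f' x) x)
    (hloc : ∀ u v, f u - fstar ≤ δ → f v - fstar ≤ δ → ‖f' u - f' v‖ ≤ Ls * ‖u - v‖)
    (wt dvec : EuclideanSpace ℝ (Fin d))
    (hwt : f wt - fstar ≤ δ)
    (hdesc : ⟪f' wt, dvec⟫ < 0)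
    (ηs : ℝ) (hηs : 0 ≤ ηs)
    (hstep : ηs * ‖dvec‖ ^ 2 ≤ 1 / Ls * |⟪f' wt, dvec⟫|) :
    f (wt + ηs • dvec) - fstar ≤ δ := by
  have hdecrease : f (wt + ηs • dvec) ≤ f wt :=
    apply_add_smul_le_of_short_descent_step hLs hdiff
      (fun u hu => hloc u wt (by linarith) hwt) hdesc hηs hstep
  linarith

/-- A descent step of size at most |⟨∇f(w_t), d⟩| / (L_* ‖d‖²) along a
descent direction d cannot leave the δ-sublevel set of a glocally (L, L_*, δ)-smooth
function. -/
theorem descent_step_stays_in_sublevel {d : ℕ}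
    (f : EuclideanSpace ℝ (Fin d) → ℝ)
    (f' : EuclideanSpace ℝ (Fin d) → EuclideanSpace ℝ (Fin d))
    (L Ls δ fstar : ℝ) (hL : 0 < L) (hLs : 0 < Ls)
    (hdiff : ∀ x, HasGradientAt f (f' x) x)
    (hfstar : IsGLB (Set.range f) fstar)
    (hglob : ∀ u v, ‖f' u - f' v‖ ≤ L * ‖u - v‖)
    (hloc : ∀ u v, f u - fstar ≤ δ → f v - fstar ≤ δ → ‖f' u - f' v‖ ≤ Ls * ‖u - v‖)
    (wt dvec : EuclideanSpace ℝ (Fin d))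
    (hwt : f wt - fstar ≤ δ)
    (hdesc : ⟪f' wt, dvec⟫ < 0)
    (ηs : ℝ) (hηs : 0 ≤ ηs)
    (hstep : ηs * ‖dvec‖ ^ 2 ≤ 1 / Ls * |⟪f' wt, dvec⟫|) :
    f (wt + ηs • dvec) - fstar ≤ δ :=
  descent_step_stays_in_sublevel_general f f' Ls δ fstar hLs hdiff hloc wt dvec hwt hdesc ηs hηs
    hstep
end

section
/- Let f : ℝ^d → ℝ be differentiable and glocally (L, L_*, δ)-smooth with infimum f_*, and let w_t ∈ ℝ^d satisfy f(w_t) − f_* ≤ δ. Then: (i) the gradient-descent step w_{t+1} = w_t − (1/L_*)∇f(w_t) satisfies f(w_{t+1}) − f_* ≤ δ; and (ii) if instead w_{t+1} = w_t − η_t∇f(w_t) with η_t chosen by exact line optimization, then f(w_{t+1}) ≤ f(w_t) − (1/(2L_*))‖∇f(w_t)‖². -/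
open scoped RealInnerProductSpace

/-!
Along the ray `s ↦ x - s • ∇f x`, the derivative of `f` is `-⟪∇f (x - s • ∇f x), ∇f x⟫`, which is
at most `-(1 - Ls s) ‖∇f x‖²` as long as the point `x - s • ∇f x` is in the sublevel set `{f ≤ f x}`,
where the gradient is `Ls`-Lipschitz. A fencing argument against the parabola
`f x - (s - Ls s²) ‖∇f x‖² / 2`, whose slope exceeds this bound by `‖∇f x‖² / 2`, shows that the
ray does not leave the sublevel set before `s = 1 / Ls`; a second fencing argument against
`f x - (s - Ls s² / 2) ‖∇f x‖²` then gives the usual descent inequality, which at `s = 1 / Ls` is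
`f x - ‖∇f x‖² / (2 Ls)`. Exact line optimization does at least as well as this step.
-/

open Set

section GradientRay

variable {F : Type*} [NormedAddCommGroup F] [InnerProductSpace ℝ F] {f : F → ℝ} {f' : F → F}

theorem neg_inner_gradient_ray_le {Ls s : ℝ} {x : F} (hs : 0 ≤ s)
    (hlip : ‖f' (x - s • f' x) - f' x‖ ≤ Ls * ‖x - s • f' x - x‖) :
    -⟪f' (x - s • f' x), f' x⟫ ≤ -(1 - Ls * s) * ‖f' x‖ ^ 2 := by
  rw [sub_sub_cancel_left, norm_neg, norm_smul, Real.norm_of_nonneg hs] at hlip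
  have hcs : ⟪f' x - f' (x - s • f' x), f' x⟫ ≤ Ls * s * ‖f' x‖ ^ 2 := by
    calc _ ≤ ‖f' x - f' (x - s • f' x)‖ * ‖f' x‖ := real_inner_le_norm _ _
      _ = ‖f' (x - s • f' x) - f' x‖ * ‖f' x‖ := by rw [norm_sub_rev]
      _ ≤ Ls * (s * ‖f' x‖) * ‖f' x‖ := by gcongr
      _ = Ls * s * ‖f' x‖ ^ 2 := by ring
  rw [inner_sub_left, real_inner_self_eq_norm_sq] at hcs
  linarith

theorem hasDerivAt_quadratic_descent (a Ls c t : ℝ) :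
    HasDerivAt (fun t => a - (t - Ls / 2 * t ^ 2) * c) (-(1 - Ls * t) * c) t := by
  have h : HasDerivAt (fun t => a - (t - Ls / 2 * t ^ 2) * c)
      (-((1 - Ls / 2 * ((2 : ℕ) * t ^ (2 - 1))) * c)) t :=
    (((hasDerivAt_id' t).sub ((hasDerivAt_pow 2 t).const_mul (Ls / 2))).mul_const c).const_sub a
  exact h.congr_deriv (by push_cast; ring)

variable [CompleteSpace F]

theorem hasDerivAt_gradient_ray (hdiff : ∀ x, HasGradientAt f (f' x) x) (x : F) (s : ℝ) :
    HasDerivAt (fun s : ℝ => f (x - s • f' x)) (-⟪f' (x - s • f' x), f' x⟫) s := by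
  have hray : HasDerivAt (fun s : ℝ => x - s • f' x) (-f' x) s := by
    simpa using ((hasDerivAt_id s).smul_const (f' x)).const_sub x
  have h := (hdiff _).hasFDerivAt.comp_hasDerivAt s hray
  simp only [InnerProductSpace.toDual_apply_apply, inner_neg_right] at h
  exact h

theorem gradient_ray_le_self (hdiff : ∀ x, HasGradientAt f (f' x) x) {Ls s : ℝ} {x : F}
    (hloc : ∀ y, f y ≤ f x → ‖f' y - f' x‖ ≤ Ls * ‖y - x‖) (hs : 0 ≤ s) (hsLs : Ls * s ≤ 1) :
    f (x - s • f' x) ≤ f x := by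
  rcases eq_or_ne (f' x) 0 with hg | hg
  · simp [hg]
  have hg2 : 0 < ‖f' x‖ ^ 2 := by positivity
  have hB := hasDerivAt_quadratic_descent (f x) (2 * Ls) (‖f' x‖ ^ 2 / 2)
  have hle := image_le_of_deriv_right_lt_deriv_boundary (a := 0) (b := s)
    (fun t _ => (hasDerivAt_gradient_ray hdiff x t).continuousAt.continuousWithinAt)
    (fun t _ => (hasDerivAt_gradient_ray hdiff x t).hasDerivWithinAt) (by simp) hB
    (fun t ht heq => ?_) (right_mem_Icc.2 hs)
  · have hgap := mul_nonneg (mul_nonneg hs (sub_nonneg.2 hsLs)) hg2.le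
    nlinarith
  · have htLs : Ls * t ≤ 1 := by nlinarith [ht.1, ht.2]
    have hgap := mul_nonneg (mul_nonneg ht.1 (sub_nonneg.2 htLs)) hg2.le
    have hsub : f (x - t • f' x) ≤ f x := by rw [heq]; nlinarith
    have hslope := neg_inner_gradient_ray_le ht.1 (hloc _ hsub)
    linarith

theorem gradient_ray_descent (hdiff : ∀ x, HasGradientAt f (f' x) x) {Ls s : ℝ} {x : F}
    (hloc : ∀ y, f y ≤ f x → ‖f' y - f' x‖ ≤ Ls * ‖y - x‖) (hs : 0 ≤ s) (hsLs : Ls * s ≤ 1) :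
    f (x - s • f' x) ≤ f x - (s - Ls / 2 * s ^ 2) * ‖f' x‖ ^ 2 := by
  have hB := hasDerivAt_quadratic_descent (f x) Ls (‖f' x‖ ^ 2)
  refine image_le_of_deriv_right_le_deriv_boundary (a := 0) (b := s)
    (fun t _ => (hasDerivAt_gradient_ray hdiff x t).continuousAt.continuousWithinAt)
    (fun t _ => (hasDerivAt_gradient_ray hdiff x t).hasDerivWithinAt) (by simp)
    (fun t _ => (hB t).continuousAt.continuousWithinAt) (fun t _ => (hB t).hasDerivWithinAt)
    (fun t ht => neg_inner_gradient_ray_le ht.1 (hloc _ (gradient_ray_le_self hdiff hloc ht.1 ?_)))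
    (right_mem_Icc.2 hs)
  nlinarith [ht.1, ht.2]

end GradientRay

theorem sublevel_gd_progress_general {d : ℕ}
    (f : EuclideanSpace ℝ (Fin d) → ℝ)
    (f' : EuclideanSpace ℝ (Fin d) → EuclideanSpace ℝ (Fin d))
    (Ls δ fstar : ℝ) (hLs : 0 < Ls)
    (hdiff : ∀ x, HasGradientAt f (f' x) x)
    (hloc : ∀ u v, f u - fstar ≤ δ → f v - fstar ≤ δ → ‖f' u - f' v‖ ≤ Ls * ‖u - v‖)
    (wt : EuclideanSpace ℝ (Fin d))
    (hwt : f wt - fstar ≤ δ) :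
    (f (wt - (1 / Ls) • f' wt) - fstar ≤ δ) ∧
    (∀ wnext : EuclideanSpace ℝ (Fin d),
      (∃ η : ℝ, wnext = wt - η • f' wt) →
      (∀ η : ℝ, f wnext ≤ f (wt - η • f' wt)) →
      f wnext ≤ f wt - 1 / (2 * Ls) * ‖f' wt‖ ^ 2) := by
  have hdesc := gradient_ray_descent hdiff (fun y hy => hloc y wt (by linarith) hwt)
    (one_div_nonneg.2 hLs.le) (mul_one_div_cancel hLs.ne').le
  have hstep : 1 / Ls - Ls / 2 * (1 / Ls) ^ 2 = 1 / (2 * Ls) := by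
    field_simp
    ring
  rw [hstep] at hdesc
  refine ⟨?_, fun wnext _ hopt => (hopt (1 / Ls)).trans hdesc⟩
  have hgain : 0 ≤ 1 / (2 * Ls) * ‖f' wt‖ ^ 2 := by positivity
  linarith

/-- Inside the δ-sublevel set of a glocally (L, L_*, δ)-smooth function:
(i) a gradient step of size 1/L_* stays in the sublevel set; (ii) an exact-line-optimization
gradient step decreases f by at least ‖∇f(w_t)‖²/(2L_*). -/
theorem sublevel_gd_progress {d : ℕ}
    (f : EuclideanSpace ℝ (Fin d) → ℝ)
    (f' : EuclideanSpace ℝ (Fin d) → EuclideanSpace ℝ (Fin d))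
    (L Ls δ fstar : ℝ) (hL : 0 < L) (hLs : 0 < Ls)
    (hdiff : ∀ x, HasGradientAt f (f' x) x)
    (hfstar : IsGLB (Set.range f) fstar)
    (hglob : ∀ u v, ‖f' u - f' v‖ ≤ L * ‖u - v‖)
    (hloc : ∀ u v, f u - fstar ≤ δ → f v - fstar ≤ δ → ‖f' u - f' v‖ ≤ Ls * ‖u - v‖)
    (wt : EuclideanSpace ℝ (Fin d))
    (hwt : f wt - fstar ≤ δ) :
    (f (wt - (1 / Ls) • f' wt) - fstar ≤ δ) ∧
    (∀ wnext : EuclideanSpace ℝ (Fin d),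
      (∃ η : ℝ, wnext = wt - η • f' wt) →
      (∀ η : ℝ, f wnext ≤ f (wt - η • f' wt)) →
      f wnext ≤ f wt - 1 / (2 * Ls) * ‖f' wt‖ ^ 2) :=
  sublevel_gd_progress_general f f' Ls δ fstar hLs hdiff hloc wt hwt
end

section
/- Let f : ℝ^d → ℝ be differentiable, glocally (L, L_*, δ)-smooth, and μ-strongly convex with minimum value f_*. Let 0 < α ≤ 1/2 and 0 < β < 1, let w₀ ∈ ℝ^d with Δ₀ = f(w₀) − f_* and Δ₀ > δ > ε > 0. Let (w_t) satisfy w_t = w_{t-1} − η_{t-1}∇f(w_{t-1}) where each step size η_{t-1} > 0 satisfies the Armijo condition f(w_t) ≤ f(w_{t-1}) − α η_{t-1}‖∇f(w_{t-1})‖², satisfies η_{t-1} ≥ β/L, and additionally satisfies η_{t-1} ≥ β/L_* whenever f(w_{t-1}) − f_* ≤ δ (these lower bounds are what a forwardtracking–backtracking line search with backtracking factor β guarantees). Then f(w_T) − f_* ≤ ε for every natural number T with T ≥ ⌈(L/(2βαμ))log(Δ₀/δ)⌉ + ⌈(L_*/(2βαμ))log(δ/ε)⌉. -/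
/-!
Strong convexity gives the Polyak–Łojasiewicz inequality `2μ (f x - f_*) ≤ ‖∇f x‖²`, so an
Armijo step with `η ≥ β / M` multiplies the optimality gap by at most
`1 - 2αβμ / M ≤ exp (-2αβμ / M)`. With `M = L` the gap drops below `δ` after
`⌈L / (2βαμ) · log (Δ₀ / δ)⌉` steps; from then on the gap stays below `δ`, the steps satisfy
`η ≥ β / L_*`, and another `⌈L_* / (2βαμ) · log (δ / ε)⌉` steps bring it below `ε`.
-/

open Real
open scoped RealInnerProductSpace

section StronglyConvex

variable {E : Type*} [NormedAddCommGroup E] [InnerProductSpace ℝ E]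
  {f : E → ℝ} {f' : E → E} {μ : ℝ}

theorem two_mul_mul_sub_le_norm_sq_of_strongly_convex (hμ : 0 < μ)
    (hsc : ∀ u v, f v ≥ f u + ⟪f' u, v - u⟫ + μ / 2 * ‖v - u‖ ^ 2) (x z : E) :
    2 * μ * (f x - f z) ≤ ‖f' x‖ ^ 2 := by
  have hxz := hsc x z
  have hcs : -(‖f' x‖ * ‖z - x‖) ≤ ⟪f' x, z - x⟫ :=
    neg_le_of_abs_le (abs_real_inner_le_norm _ _)
  nlinarith [sq_nonneg (‖f' x‖ - μ * ‖z - x‖)]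

theorem sub_le_exp_mul_of_armijo_of_strongly_convex {α β M η : ℝ} {x y z : E}
    (hμ : 0 < μ) (hα : 0 < α) (hη : 0 < η)
    (hsc : ∀ u v, f v ≥ f u + ⟪f' u, v - u⟫ + μ / 2 * ‖v - u‖ ^ 2)
    (hz : ∀ u, f z ≤ f u) (harmijo : f y ≤ f x - α * η * ‖f' x‖ ^ 2) (hηM : β / M ≤ η) :
    f y - f z ≤ exp (-(M / (2 * β * α * μ))⁻¹) * (f x - f z) := by
  have hpl := two_mul_mul_sub_le_norm_sq_of_strongly_convex hμ hsc x z
  set Δ := f x - f z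
  have hΔ : 0 ≤ Δ := sub_nonneg.mpr (hz x)
  have hdecrease : α * η * (2 * μ * Δ) ≤ α * η * ‖f' x‖ ^ 2 := by gcongr
  have hη' : β / M * (2 * α * μ * Δ) ≤ η * (2 * α * μ * Δ) := by gcongr
  have hexp := add_one_le_exp (-(M / (2 * β * α * μ))⁻¹)
  rw [inv_div] at hexp ⊢
  have hrate : β / M * (2 * α * μ * Δ) = 2 * β * α * μ / M * Δ := by ring
  calc f y - f z ≤ Δ - α * η * (2 * μ * Δ) := by linarith
    _ ≤ (-(2 * β * α * μ / M) + 1) * Δ := by linarith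
    _ ≤ exp (-(2 * β * α * μ / M)) * Δ := by gcongr

end StronglyConvex

section Contraction

variable {u : ℕ → ℝ}

theorem le_exp_neg_mul_of_contracting_below {c a : ℝ} (hc : 0 ≤ c) (ha : 0 ≤ a)
    (hu₀ : u 0 ≤ a) (hstep : ∀ n, u n ≤ a → u (n + 1) ≤ exp (-c) * u n) (n : ℕ) :
    u n ≤ exp (-(c * n)) * a := by
  induction n with
  | zero => simpa using hu₀
  | succ n ih =>
    have hle : u n ≤ a := ih.trans <| mul_le_of_le_one_left ha <|
      exp_le_one_iff.mpr (neg_nonpos.mpr (by positivity))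
    calc u (n + 1) ≤ exp (-c) * u n := hstep n hle
      _ ≤ exp (-c) * (exp (-(c * n)) * a) := by gcongr
      _ = exp (-(c * ↑(n + 1))) * a := by
        rw [← mul_assoc, ← exp_add]; push_cast; ring_nf

theorem le_of_ceil_mul_log_le {K a b : ℝ} (hK : 0 < K) (ha : 0 < a) (hb : 0 < b)
    (hu₀ : u 0 ≤ a) (hstep : ∀ n, u n ≤ a → u (n + 1) ≤ exp (-K⁻¹) * u n) {n : ℕ}
    (hn : ⌈K * log (a / b)⌉ ≤ n) : u n ≤ b := by
  have hlog : log (a / b) ≤ K⁻¹ * n := by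
    rw [le_inv_mul_iff₀ hK]
    exact (Int.ceil_le.mp hn).trans_eq (by push_cast; ring)
  have ha_le : a ≤ exp (K⁻¹ * n) * b := by
    rw [log_le_iff_le_exp (div_pos ha hb), div_le_iff₀ hb] at hlog
    exact hlog
  calc u n ≤ exp (-(K⁻¹ * n)) * a :=
        le_exp_neg_mul_of_contracting_below (inv_nonneg.mpr hK.le) ha.le hu₀ hstep n
    _ ≤ exp (-(K⁻¹ * n)) * (exp (K⁻¹ * n) * b) := by gcongr
    _ = b := by rw [← mul_assoc, ← exp_add]; simp

theorem le_of_two_phase_contraction {K₁ K₂ δ ε : ℝ} (hK₁ : 0 < K₁) (hK₂ : 0 < K₂)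
    (hδ : δ < u 0) (hε : 0 < ε) (hεδ : ε < δ)
    (h₁ : ∀ n, u (n + 1) ≤ exp (-K₁⁻¹) * u n)
    (h₂ : ∀ n, u n ≤ δ → u (n + 1) ≤ exp (-K₂⁻¹) * u n) (T : ℕ)
    (hT : ⌈K₁ * log (u 0 / δ)⌉ + ⌈K₂ * log (δ / ε)⌉ ≤ T) : u T ≤ ε := by
  have hδ₀ : 0 < δ := hε.trans hεδ
  have hn₁ : 0 ≤ ⌈K₁ * log (u 0 / δ)⌉ :=
    Int.ceil_nonneg (mul_nonneg hK₁.le (log_nonneg ((one_le_div hδ₀).mpr hδ.le)))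
  have hn₂ : 0 ≤ ⌈K₂ * log (δ / ε)⌉ :=
    Int.ceil_nonneg (mul_nonneg hK₂.le (log_nonneg ((one_le_div hε).mpr hεδ.le)))
  set n₁ := ⌈K₁ * log (u 0 / δ)⌉.toNat
  have hphase₁ : u n₁ ≤ δ :=
    le_of_ceil_mul_log_le hK₁ (hδ₀.trans hδ) hδ₀ le_rfl (fun n _ => h₁ n)
      (Int.self_le_toNat _)
  obtain ⟨m, rfl⟩ : ∃ m, T = n₁ + m := ⟨T - n₁, by omega⟩
  exact le_of_ceil_mul_log_le (u := fun m => u (n₁ + m)) hK₂ hδ₀ hε hphase₁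
    (fun m hm => h₂ _ hm) (by omega)

end Contraction

theorem gd_armijo_forwardtracking_glocal_complexity_general {d : ℕ}
    (f : EuclideanSpace ℝ (Fin d) → ℝ)
    (f' : EuclideanSpace ℝ (Fin d) → EuclideanSpace ℝ (Fin d))
    (L Ls δ ε μ α β : ℝ)
    (hL : 0 < L) (hLs : 0 < Ls) (hμ : 0 < μ)
    (hα : 0 < α) (hβ : 0 < β)
    (fstar : ℝ)
    (hsc : ∀ u v, f v ≥ f u + ⟪f' u, v - u⟫ + μ / 2 * ‖v - u‖ ^ 2)
    (hmin : ∃ wstar, f wstar = fstar ∧ ∀ x, fstar ≤ f x)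
    (w : ℕ → EuclideanSpace ℝ (Fin d))
    (hΔδ : f (w 0) - fstar > δ) (hδε : δ > ε) (hε : ε > 0)
    (hstep : ∀ t : ℕ, ∃ η : ℝ, 0 < η ∧
      w (t + 1) = w t - η • f' (w t) ∧
      f (w (t + 1)) ≤ f (w t) - α * η * ‖f' (w t)‖ ^ 2 ∧
      β / L ≤ η ∧
      (f (w t) - fstar ≤ δ → β / Ls ≤ η)) :
    ∀ T : ℕ,
      (⌈L / (2 * β * α * μ) * Real.log ((f (w 0) - fstar) / δ)⌉ +
        ⌈Ls / (2 * β * α * μ) * Real.log (δ / ε)⌉ : ℤ) ≤ T →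
      f (w T) - fstar ≤ ε := by
  obtain ⟨wstar, rfl, hwstar⟩ := hmin
  refine le_of_two_phase_contraction (u := fun t => f (w t) - f wstar)
    (by positivity) (by positivity) hΔδ hε hδε ?_ ?_
  · intro t
    obtain ⟨η, hη, -, harmijo, hηL, -⟩ := hstep t
    exact sub_le_exp_mul_of_armijo_of_strongly_convex hμ hα hη hsc hwstar harmijo hηL
  · intro t ht
    obtain ⟨η, hη, -, harmijo, -, hηLs⟩ := hstep t
    exact sub_le_exp_mul_of_armijo_of_strongly_convex hμ hα hη hsc hwstar harmijo (hηLs ht)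

/-- Iteration complexity of gradient descent with a
forwardtracking–backtracking Armijo line search under glocal (L, L_*, δ)-smoothness
and μ-strong convexity. -/
theorem gd_armijo_forwardtracking_glocal_complexity {d : ℕ}
    (f : EuclideanSpace ℝ (Fin d) → ℝ)
    (f' : EuclideanSpace ℝ (Fin d) → EuclideanSpace ℝ (Fin d))
    (L Ls δ ε μ α β : ℝ)
    (hL : 0 < L) (hLs : 0 < Ls) (hμ : 0 < μ)
    (hα : 0 < α) (hα' : α ≤ 1 / 2) (hβ : 0 < β) (hβ' : β < 1)
    (fstar : ℝ)
    (hdiff : ∀ x, HasGradientAt f (f' x) x)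
    (hglob : ∀ u v, ‖f' u - f' v‖ ≤ L * ‖u - v‖)
    (hloc : ∀ u v, f u - fstar ≤ δ → f v - fstar ≤ δ → ‖f' u - f' v‖ ≤ Ls * ‖u - v‖)
    (hsc : ∀ u v, f v ≥ f u + ⟪f' u, v - u⟫ + μ / 2 * ‖v - u‖ ^ 2)
    (hmin : ∃ wstar, f wstar = fstar ∧ ∀ x, fstar ≤ f x)
    (w : ℕ → EuclideanSpace ℝ (Fin d))
    (hΔδ : f (w 0) - fstar > δ) (hδε : δ > ε) (hε : ε > 0)
    (hstep : ∀ t : ℕ, ∃ η : ℝ, 0 < η ∧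
      w (t + 1) = w t - η • f' (w t) ∧
      f (w (t + 1)) ≤ f (w t) - α * η * ‖f' (w t)‖ ^ 2 ∧
      β / L ≤ η ∧
      (f (w t) - fstar ≤ δ → β / Ls ≤ η)) :
    ∀ T : ℕ,
      (⌈L / (2 * β * α * μ) * Real.log ((f (w 0) - fstar) / δ)⌉ +
        ⌈Ls / (2 * β * α * μ) * Real.log (δ / ε)⌉ : ℤ) ≤ T →
      f (w T) - fstar ≤ ε :=
  gd_armijo_forwardtracking_glocal_complexity_general f f' L Ls δ ε μ α β hL hLs hμ hα hβ fstar hsc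
    hmin w hΔδ hδε hε hstep
end

section
/- Let f : ℝ^d → ℝ be differentiable, glocally (L, L_*, δ)-smooth, globally μ-strongly convex, and additionally μ_*-strongly convex on the sublevel set {w : f(w) − f_* ≤ δ} (i.e. f(v) ≥ f(u) + ⟨∇f(u), v − u⟩ + (μ_*/2)‖v − u‖² for all u, v in this set). Assume Δ₀ = f(w₀) − f_* > δ > ε > 0 and let (w_t) be gradient-descent iterates w_{t+1} = w_t − η_t∇f(w_t) with each η_t chosen by exact line optimization. Then f(w_T) − f_* ≤ ε for every natural number T with T ≥ ⌈(L/μ)log(Δ₀/δ)⌉ + ⌈(L_*/μ_*)log(δ/ε)⌉. -/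
/-!
Along a gradient step from a point where `f'` is `K`-Lipschitz on the sublevel set of that
point, the directional derivative `-⟪f' (x - t • f' x), f' x⟫` stays negative for `t < K⁻¹`, so
the segment never leaves the sublevel set and the descent lemma gives
`f (x - K⁻¹ • f' x) ≤ f x - ‖f' x‖² / (2K)`. Exact line optimization does at least as well, and
strong convexity at a minimiser gives the Polyak–Łojasiewicz bound `f x - f_* ≤ ‖f' x‖² / (2m)`,
so the gap contracts by `1 - m / K` per step as long as the iterates stay in the sublevel set
(which they do, since exact line optimization is monotone). Run this twice: with `(L, μ)` on all
of space until the gap is `δ`, then with `(L_*, μ_*)` on the `δ`-sublevel set until it is `ε`.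
-/

open scoped RealInnerProductSpace
open Set

lemma sub_le_norm_sq_div_of_le_add_inner_add_sq {E : Type*} [NormedAddCommGroup E]
    [InnerProductSpace ℝ E] {a b m : ℝ} {g z : E} (hm : 0 < m)
    (h : b ≥ a + ⟪g, z⟫ + m / 2 * ‖z‖ ^ 2) : a - b ≤ ‖g‖ ^ 2 / (2 * m) := by
  have hcs := neg_le_of_abs_le (abs_real_inner_le_norm g z)
  rw [le_div_iff₀ (by positivity)]
  nlinarith [sq_nonneg (‖g‖ - m * ‖z‖)]

lemma le_of_le_one_sub_mul {Δ : ℕ → ℝ} {Δ₀ ρ ε : ℝ} (hε : 0 < ε) (hΔ : ∀ n, 0 ≤ Δ n)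
    (hcontract : ∀ n, Δ (n + 1) ≤ (1 - ρ) * Δ n) (h0 : Δ 0 ≤ Δ₀) {n : ℕ}
    (hn : Real.log (Δ₀ / ε) ≤ ρ * n) :
    Δ n ≤ ε := by
  have hexp : ∀ n : ℕ, Δ n ≤ Real.exp (-(ρ * n)) * Δ 0 := by
    intro n
    induction n with
    | zero => simp
    | succ n ih =>
      calc Δ (n + 1) ≤ (1 - ρ) * Δ n := hcontract n
        _ ≤ Real.exp (-ρ) * (Real.exp (-(ρ * n)) * Δ 0) := by
          gcongr
          · exact hΔ n
          · linarith [Real.add_one_le_exp (-ρ)]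
        _ = Real.exp (-(ρ * ↑(n + 1))) * Δ 0 := by
          rw [← mul_assoc, ← Real.exp_add]; push_cast; ring_nf
  have hstart : Δ₀ ≤ ε * Real.exp (ρ * n) := by
    rcases ((hΔ 0).trans h0).eq_or_lt with hΔ₀ | hΔ₀
    · rw [← hΔ₀]
      positivity
    · rw [← div_le_iff₀' hε, ← Real.log_le_iff_le_exp (by positivity)]
      exact hn
  calc Δ n ≤ Real.exp (-(ρ * n)) * Δ 0 := hexp n
    _ ≤ Real.exp (-(ρ * n)) * (ε * Real.exp (ρ * n)) := by gcongr; exact h0.trans hstart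
    _ = ε := by rw [mul_left_comm, ← Real.exp_add]; simp

section GradientStep

variable {E : Type*} [NormedAddCommGroup E] [InnerProductSpace ℝ E] [CompleteSpace E]
  {f : E → ℝ} {f' : E → E}

lemma hasDerivAt_comp_sub_smul (hf : ∀ x, HasGradientAt f (f' x) x) (x v : E) (t : ℝ) :
    HasDerivAt (fun s : ℝ => f (x - s • v)) (-⟪f' (x - t • v), v⟫) t := by
  have hline : HasDerivAt (fun s : ℝ => x - s • v) (-v) t := by
    simpa using ((hasDerivAt_id t).smul_const v).const_sub x
  simpa [Function.comp_def] using (hf (x - t • v)).hasFDerivAt.comp_hasDerivAt t hline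

/-- The descent lemma, needing the Lipschitz bound on the gradient only along the step. -/
lemma le_sub_of_norm_grad_sub_le (hf : ∀ x, HasGradientAt f (f' x) x) {x : E} {C s : ℝ}
    (hs : 0 ≤ s) (hC : ∀ t ∈ Icc 0 s, ‖f' (x - t • f' x) - f' x‖ ≤ C * t * ‖f' x‖) :
    f (x - s • f' x) ≤ f x - s * ‖f' x‖ ^ 2 + C * s ^ 2 / 2 * ‖f' x‖ ^ 2 := by
  set g := f' x
  set ψ : ℝ → ℝ := fun t => f (x - t • g) + t * ‖g‖ ^ 2 - C / 2 * t ^ 2 * ‖g‖ ^ 2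
  have hψ : ∀ t, HasDerivAt ψ (⟪g - f' (x - t • g), g⟫ - C * t * ‖g‖ ^ 2) t := fun t => by
    have := ((hasDerivAt_comp_sub_smul hf x g t).add
      ((hasDerivAt_id t).mul_const (‖g‖ ^ 2))).sub
      (((hasDerivAt_pow 2 t).const_mul (C / 2)).mul_const (‖g‖ ^ 2))
    refine this.congr_deriv ?_
    rw [inner_sub_left, real_inner_self_eq_norm_sq]
    ring
  have hanti : AntitoneOn ψ (Icc 0 s) := by
    refine antitoneOn_of_hasDerivWithinAt_nonpos (convex_Icc 0 s)
      (fun t _ => (hψ t).continuousAt.continuousWithinAt) (fun t _ => (hψ t).hasDerivWithinAt)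
      fun t ht => ?_
    have ht' := interior_subset ht
    have h1 := real_inner_le_norm (g - f' (x - t • g)) g
    have h2 := mul_le_mul_of_nonneg_right (norm_sub_rev g (f' (x - t • g)) ▸ hC t ht')
      (norm_nonneg g)
    nlinarith
  have := hanti (left_mem_Icc.2 hs) (right_mem_Icc.2 hs) hs
  simp only [ψ, zero_smul, sub_zero, zero_mul, add_zero, ne_eq, OfNat.ofNat_ne_zero,
    not_false_eq_true, zero_pow, mul_zero] at this
  linarith

lemma apply_sub_smul_grad_le_of_mem_Icc (hf : ∀ x, HasGradientAt f (f' x) x) {K c : ℝ}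
    (hK : 0 < K) (hsmooth : ∀ u v, f u ≤ c → f v ≤ c → ‖f' u - f' v‖ ≤ K * ‖u - v‖)
    {x : E} (hx : f x ≤ c) : ∀ t ∈ Icc 0 K⁻¹, f (x - t • f' x) ≤ f x := by
  set g := f' x
  rcases eq_or_ne g 0 with hg | hg
  · intro t _
    simp [hg]
  have hφ := hasDerivAt_comp_sub_smul hf x g
  have hcont : Continuous fun t : ℝ => f (x - t • g) :=
    continuous_iff_continuousAt.2 fun t => (hφ t).continuousAt
  -- real induction on `[0, K⁻¹]`
  refine IsClosed.Icc_subset_of_forall_mem_nhdsWithin (s := {t | f (x - t • g) ≤ f x})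
    ((isClosed_le hcont continuous_const).inter isClosed_Icc) (by simp) ?_
  rintro t ⟨ht, ht0, htK⟩
  have hnear : ‖f' (x - t • g) - g‖ ≤ K * t * ‖g‖ := by
    have := hsmooth _ _ (ht.trans hx) hx
    rwa [sub_sub_cancel_left, norm_neg, norm_smul, Real.norm_of_nonneg ht0, ← mul_assoc] at this
  have hKt : K * t < 1 := by
    simpa [hK.ne'] using mul_lt_mul_of_pos_left htK hK
  have hderiv : -⟪f' (x - t • g), g⟫ < 0 := by
    have h1 := real_inner_le_norm (g - f' (x - t • g)) g
    rw [inner_sub_left, real_inner_self_eq_norm_sq, norm_sub_rev] at h1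
    nlinarith [mul_pos (sub_pos.2 hKt) (pow_pos (norm_pos_iff.2 hg) 2),
      mul_le_mul_of_nonneg_right hnear (norm_nonneg g)]
  filter_upwards [(hφ t).hasDerivWithinAt.limsup_slope_le' (lt_irrefl t) hderiv,
    self_mem_nhdsWithin] with u hu htu
  rw [slope_def_field, div_lt_iff₀ (sub_pos.2 htu), zero_mul] at hu
  exact (sub_neg.1 hu).le.trans ht

lemma apply_sub_inv_smul_grad_le (hf : ∀ x, HasGradientAt f (f' x) x) {K c : ℝ}
    (hK : 0 < K) (hsmooth : ∀ u v, f u ≤ c → f v ≤ c → ‖f' u - f' v‖ ≤ K * ‖u - v‖)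
    {x : E} (hx : f x ≤ c) : f (x - K⁻¹ • f' x) ≤ f x - ‖f' x‖ ^ 2 / (2 * K) := by
  have hstay := apply_sub_smul_grad_le_of_mem_Icc hf hK hsmooth hx
  have hdescent := le_sub_of_norm_grad_sub_le hf (C := K) (inv_nonneg.2 hK.le) fun t ht => by
    have := hsmooth _ _ ((hstay t ht).trans hx) hx
    rwa [sub_sub_cancel_left, norm_neg, norm_smul, Real.norm_of_nonneg ht.1, ← mul_assoc] at this
  calc f (x - K⁻¹ • f' x)
      ≤ f x - K⁻¹ * ‖f' x‖ ^ 2 + K * K⁻¹ ^ 2 / 2 * ‖f' x‖ ^ 2 := hdescent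
    _ = f x - ‖f' x‖ ^ 2 / (2 * K) := by field_simp; ring

lemma sub_le_of_exactLineSearch (hf : ∀ x, HasGradientAt f (f' x) x) {K m fstar Δ₀ ε : ℝ}
    (hK : 0 < K) (hm : 0 < m) (hε : 0 < ε)
    (hsmooth : ∀ u v, f u - fstar ≤ Δ₀ → f v - fstar ≤ Δ₀ → ‖f' u - f' v‖ ≤ K * ‖u - v‖)
    (hpl : ∀ u, f u - fstar ≤ Δ₀ → f u - fstar ≤ ‖f' u‖ ^ 2 / (2 * m))
    (hfstar : ∀ u, fstar ≤ f u) {w : ℕ → E} (hw0 : f (w 0) - fstar ≤ Δ₀)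
    (hstep : ∀ t (η : ℝ), f (w (t + 1)) ≤ f (w t - η • f' (w t)))
    {n : ℕ} (hn : K / m * Real.log (Δ₀ / ε) ≤ n) :
    f (w n) - fstar ≤ ε := by
  have hsmooth' : ∀ u v, f u ≤ fstar + Δ₀ → f v ≤ fstar + Δ₀ → ‖f' u - f' v‖ ≤ K * ‖u - v‖ :=
    fun u v hu hv => hsmooth u v (by linarith) (by linarith)
  have hsub : ∀ t, f (w t) - fstar ≤ Δ₀ := by
    intro t
    induction t with
    | zero => exact hw0
    | succ t ih =>
      have := hstep t 0
      rw [zero_smul, sub_zero] at this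
      linarith
  refine le_of_le_one_sub_mul (Δ := fun t => f (w t) - fstar) (ρ := m / K) hε
    (fun t => sub_nonneg.2 (hfstar _)) (fun t => ?_) hw0 ?_
  · have hdescent := (hstep t K⁻¹).trans
      (apply_sub_inv_smul_grad_le hf hK hsmooth' (c := fstar + Δ₀) (by linarith [hsub t]))
    have hgain : m / K * (f (w t) - fstar) ≤ ‖f' (w t)‖ ^ 2 / (2 * K) :=
      calc m / K * (f (w t) - fstar) ≤ m / K * (‖f' (w t)‖ ^ 2 / (2 * m)) := by
            gcongr
            exact hpl _ (hsub t)
        _ = ‖f' (w t)‖ ^ 2 / (2 * K) := by field_simp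
    linarith [show (1 - m / K) * (f (w t) - fstar) = f (w t) - fstar - m / K * (f (w t) - fstar)
      by ring]
  · rw [div_mul_eq_mul_div, div_le_iff₀ hm] at hn
    rw [div_mul_eq_mul_div, le_div_iff₀ hK]
    linarith

end GradientStep

/-- Iteration complexity of gradient descent with exact line optimization
under glocal smoothness and glocal strong convexity (globally μ, locally μ_* on the
δ-sublevel set). -/
theorem gd_lo_glocal_strong_convexity_complexity {d : ℕ}
    (f : EuclideanSpace ℝ (Fin d) → ℝ)
    (f' : EuclideanSpace ℝ (Fin d) → EuclideanSpace ℝ (Fin d))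
    (L Ls δ ε μ μs fstar : ℝ)
    (hL : 0 < L) (hLs : 0 < Ls) (hμ : 0 < μ) (hμs : 0 < μs)
    (hdiff : ∀ x, HasGradientAt f (f' x) x)
    (hglob : ∀ u v, ‖f' u - f' v‖ ≤ L * ‖u - v‖)
    (hloc : ∀ u v, f u - fstar ≤ δ → f v - fstar ≤ δ → ‖f' u - f' v‖ ≤ Ls * ‖u - v‖)
    (hsc : ∀ u v, f v ≥ f u + ⟪f' u, v - u⟫ + μ / 2 * ‖v - u‖ ^ 2)
    (hscloc : ∀ u v, f u - fstar ≤ δ → f v - fstar ≤ δ →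
      f v ≥ f u + ⟪f' u, v - u⟫ + μs / 2 * ‖v - u‖ ^ 2)
    (hmin : ∃ wstar, f wstar = fstar ∧ ∀ x, fstar ≤ f x)
    (w : ℕ → EuclideanSpace ℝ (Fin d))
    (hΔδ : f (w 0) - fstar > δ) (hδε : δ > ε) (hε : ε > 0)
    (hstep : ∀ t : ℕ,
      (∃ η : ℝ, w (t + 1) = w t - η • f' (w t)) ∧
        ∀ η : ℝ, f (w (t + 1)) ≤ f (w t - η • f' (w t))) :
    ∀ T : ℕ,
      (⌈L / μ * Real.log ((f (w 0) - fstar) / δ)⌉ + ⌈Ls / μs * Real.log (δ / ε)⌉ : ℤ) ≤ T →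
      f (w T) - fstar ≤ ε := by
  intro T hT
  obtain ⟨wstar, hfw, hfstar⟩ := hmin
  have hδ : 0 < δ := hε.trans hδε
  have hlo : ∀ t (η : ℝ), f (w (t + 1)) ≤ f (w t - η • f' (w t)) := fun t => (hstep t).2
  have hT₁ : 0 ≤ ⌈L / μ * Real.log ((f (w 0) - fstar) / δ)⌉ := Int.ceil_nonneg <|
    mul_nonneg (div_pos hL hμ).le (Real.log_nonneg ((one_le_div hδ).2 hΔδ.le))
  have hT₂ : 0 ≤ ⌈Ls / μs * Real.log (δ / ε)⌉ := Int.ceil_nonneg <|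
    mul_nonneg (div_pos hLs hμs).le (Real.log_nonneg ((one_le_div hε).2 hδε.le))
  obtain ⟨T₁, hT₁⟩ := Int.eq_ofNat_of_zero_le hT₁
  obtain ⟨n, rfl⟩ : ∃ n, T = T₁ + n := Nat.exists_eq_add_of_le (by omega)
  have hphase₁ : f (w T₁) - fstar ≤ δ :=
    sub_le_of_exactLineSearch hdiff hL hμ hδ (fun u v _ _ => hglob u v)
      (fun u _ => hfw ▸ sub_le_norm_sq_div_of_le_add_inner_add_sq hμ (hsc u wstar)) hfstar
      le_rfl hlo (by exact_mod_cast hT₁ ▸ Int.le_ceil _)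
  exact sub_le_of_exactLineSearch hdiff hLs hμs hε (w := fun k => w (T₁ + k)) hloc
    (fun u hu => hfw ▸ sub_le_norm_sq_div_of_le_add_inner_add_sq hμs
      (hscloc u wstar hu (by linarith)))
    hfstar hphase₁ (fun t => hlo (T₁ + t))
    (by exact_mod_cast Int.ceil_le.1 (by push_cast at hT; omega))
end

section
/- There exist absolute constants C₁, C₂ > 0 such that the following holds. Let f : ℝ^d → ℝ be differentiable, convex, coercive, glocally (L, L_*, δ)-smooth, and μ_*-strongly convex on the sublevel set {w : f(w) − f_* ≤ δ}, with Δ₀ = f(w₀) − f_* > δ > ε > 0. Define R²(ρ) = sup{‖w − w_*‖² : f(w) ≤ ρ, w_* a minimizer of f} (finite by coercivity). Let (w_t) be gradient-descent iterates w_{t+1} = w_t − η_t∇f(w_t) with each η_t chosen by exact line optimization. Then f(w_T) − f_* ≤ ε for every natural number T with T ≥ C₁(L/δ)R²(f(w₀)) + C₂(L_*/μ_*)log(δ/ε). -/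
open scoped RealInnerProductSpace
open Set Filter Topology

/-!
Exact line search decreases `f` at least as much as the fixed steps `1 / L` and `1 / L_*`. The
step `1 / L_*` is admissible from any point of the `δ`-sublevel set: by continuous induction
along the segment from `x` to `x - ∇f(x) / L_*`, the segment never leaves `{f ≤ f x}`, where the
local Lipschitz bound on `∇f` applies.

With `Δ_t = f(w_t) - f_*` and `R = R(f(w_0))`, convexity gives `Δ_t ≤ ‖∇f(w_t)‖ R`, so the
`1 / L` decrease yields `Δ_t² ≤ 2 L R² (Δ_t - Δ_{t+1})`, hence `Δ_t ≤ 2 L R² / t`: after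
`O(L R² / δ)` steps the iterates are in the `δ`-sublevel set. There strong convexity gives the
Polyak–Łojasiewicz inequality `‖∇f‖² ≥ 2 μ_* Δ`, so the `1 / L_*` decrease contracts `Δ` by
`1 - μ_* / L_*` per step.
-/

section OneVariable

theorem le_add_mul_add_sq_of_deriv_sub_le {h h' : ℝ → ℝ} {K c : ℝ} (hc : 0 ≤ c)
    (hh : ∀ s ∈ Icc 0 c, HasDerivAt h (h' s) s) (hK : ∀ s ∈ Icc 0 c, h' s - h' 0 ≤ K * s) :
    h c ≤ h 0 + c * h' 0 + K * c ^ 2 / 2 := by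
  have hB : ∀ s, HasDerivAt (fun s => h 0 + s * h' 0 + K * s ^ 2 / 2) (h' 0 + K * s) s := by
    intro s
    have := (((hasDerivAt_id s).mul_const (h' 0)).const_add (h 0)).add
      (((hasDerivAt_pow 2 s).const_mul K).div_const 2)
    exact this.congr_deriv (by simp only [one_mul, Nat.add_one_sub_one, pow_one]; push_cast; ring)
  refine image_le_of_deriv_right_le_deriv_boundary (B := fun s => h 0 + s * h' 0 + K * s ^ 2 / 2)
    (fun s hs => (hh s hs).continuousAt.continuousWithinAt)
    (fun s hs => (hh s (Ico_subset_Icc_self hs)).hasDerivWithinAt) (by simp)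
    (fun s _ => (hB s).continuousAt.continuousWithinAt) (fun s _ => (hB s).hasDerivWithinAt)
    (fun s hs => by linarith [hK s (Ico_subset_Icc_self hs)]) ⟨hc, le_rfl⟩

theorem HasDerivAt.eventually_nhdsGT_lt {h : ℝ → ℝ} {a s : ℝ} (hh : HasDerivAt h a s)
    (ha : a < 0) : ∀ᶠ t in 𝓝[>] s, h t < h s := by
  have hslope : ∀ᶠ t in 𝓝[>] s, slope h s t < 0 :=
    ((hasDerivAt_iff_tendsto_slope.mp hh).mono_left (nhdsGT_le_nhdsNE s)).eventually
      (eventually_lt_nhds ha)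
  filter_upwards [hslope, self_mem_nhdsWithin] with t ht hst
  exact (slope_neg_iff_of_le (le_of_lt hst)).mp ht

end OneVariable

section InnerProductSpace

variable {E : Type*} [NormedAddCommGroup E] [InnerProductSpace ℝ E] {f : E → ℝ} {f' : E → E}

theorem two_mul_mul_sub_le_sq_norm {μ : ℝ} (hμ : 0 < μ) {u v g : E}
    (hsc : f v ≥ f u + ⟪g, v - u⟫ + μ / 2 * ‖v - u‖ ^ 2) :
    2 * μ * (f u - f v) ≤ ‖g‖ ^ 2 := by
  have hcs := (neg_le_abs _).trans (abs_real_inner_le_norm g (v - u))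
  nlinarith [sq_nonneg (‖g‖ - μ * ‖v - u‖)]

theorem sub_le_one_sub_mul_of_descent {μ K : ℝ} (hμ : 0 < μ) (hK : 0 < K) {x y ws : E}
    (hsc : f ws ≥ f x + ⟪f' x, ws - x⟫ + μ / 2 * ‖ws - x‖ ^ 2)
    (hdesc : f y ≤ f x - ‖f' x‖ ^ 2 / (2 * K)) :
    f y - f ws ≤ (1 - μ / K) * (f x - f ws) := by
  have hpl := two_mul_mul_sub_le_sq_norm hμ hsc
  have : μ / K * (f x - f ws) ≤ ‖f' x‖ ^ 2 / (2 * K) := by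
    rw [div_mul_eq_mul_div, div_le_div_iff₀ hK (by positivity)]
    nlinarith
  linarith

variable [CompleteSpace E]

theorem HasGradientAt.comp_hasDerivAt {γ : ℝ → E} {g γ' : E} {t : ℝ}
    (hf : HasGradientAt f g (γ t)) (hγ : HasDerivAt γ γ' t) :
    HasDerivAt (f ∘ γ) ⟪g, γ'⟫ t := by
  simpa [InnerProductSpace.toDual_apply_apply] using hf.hasFDerivAt.comp_hasDerivAt t hγ

theorem ConvexOn.add_inner_gradient_le (hconv : ConvexOn ℝ univ f) {g u : E}
    (hf : HasGradientAt f g u) (v : E) : f u + ⟪g, v - u⟫ ≤ f v := by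
  have hline : ConvexOn ℝ univ (f ∘ AffineMap.lineMap (k := ℝ) u v) := by
    simpa using hconv.comp_affineMap (AffineMap.lineMap (k := ℝ) u v)
  have hderiv : HasDerivAt (f ∘ AffineMap.lineMap (k := ℝ) u v) ⟪g, v - u⟫ 0 :=
    HasGradientAt.comp_hasDerivAt (by simpa using hf) AffineMap.hasDerivAt_lineMap
  have := hline.le_slope_of_hasDerivAt (mem_univ 0) (mem_univ 1) one_pos hderiv
  simp only [slope_def_field, Function.comp_apply, AffineMap.lineMap_apply_one,
    AffineMap.lineMap_apply_zero, sub_zero, div_one] at this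
  linarith

theorem sub_le_norm_gradient_mul_norm_sub (hconv : ConvexOn ℝ univ f) {g u : E}
    (hf : HasGradientAt f g u) (v : E) : f u - f v ≤ ‖g‖ * ‖u - v‖ := by
  have h := hconv.add_inner_gradient_le hf v
  have hcs := (neg_le_abs _).trans (abs_real_inner_le_norm g (v - u))
  rw [norm_sub_rev] at hcs
  linarith

theorem apply_sub_inv_smul_gradient_le (hf : ∀ x, HasGradientAt f (f' x) x) {K : ℝ}
    (hK : 0 < K) {x : E} (hlip : ∀ u, f u ≤ f x → ‖f' u - f' x‖ ≤ K * ‖u - x‖) :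
    f (x - K⁻¹ • f' x) ≤ f x - ‖f' x‖ ^ 2 / (2 * K) := by
  set g := f' x
  set h : ℝ → ℝ := fun s => f (x - s • g)
  have hderiv : ∀ s, HasDerivAt h (-⟪f' (x - s • g), g⟫) s := fun s => by
    have := (hf (x - s • g)).comp_hasDerivAt (((hasDerivAt_id s).smul_const g).const_sub x)
    rwa [one_smul, inner_neg_right] at this
  have hderiv_sub : ∀ s, 0 ≤ s → h s ≤ h 0 →
      -⟪f' (x - s • g), g⟫ - -⟪f' (x - (0:ℝ) • g), g⟫ ≤ K * ‖g‖ ^ 2 * s := by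
    intro s hs hhs
    have hlip_s : ‖f' (x - s • g) - g‖ ≤ K * (s * ‖g‖) := by
      simpa [norm_smul, abs_of_nonneg hs] using hlip (x - s • g) (by simpa [h] using hhs)
    calc -⟪f' (x - s • g), g⟫ - -⟪f' (x - (0:ℝ) • g), g⟫ = -⟪f' (x - s • g) - g, g⟫ := by
          rw [zero_smul, sub_zero, inner_sub_left]; ring
      _ ≤ ‖f' (x - s • g) - g‖ * ‖g‖ := (neg_le_abs _).trans (abs_real_inner_le_norm _ _)
      _ ≤ K * (s * ‖g‖) * ‖g‖ := by gcongr
      _ = K * ‖g‖ ^ 2 * s := by ring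
  -- At a point of the segment still in `{f ≤ f x}` the Lipschitz bound makes the slope negative.
  have hsub : Icc 0 K⁻¹ ⊆ {s | h s ≤ h 0} := by
    rcases eq_or_ne g 0 with hg | hg
    · intro s _
      simp [h, hg]
    refine IsClosed.Icc_subset_of_forall_mem_nhdsWithin ?_ (le_refl (h 0)) ?_
    · exact (isClosed_le (continuous_iff_continuousAt.2 fun s => (hderiv s).continuousAt)
        continuous_const).inter isClosed_Icc
    rintro s ⟨hhs, hs0, hsK⟩
    have hneg : -⟪f' (x - s • g), g⟫ < 0 := by
      have h0 : -⟪f' (x - (0:ℝ) • g), g⟫ = -‖g‖ ^ 2 := by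
        rw [zero_smul, sub_zero]; exact congrArg Neg.neg (real_inner_self_eq_norm_sq g)
      have hgpos : 0 < ‖g‖ ^ 2 := by positivity
      have : K * s < 1 := by
        calc K * s < K * K⁻¹ := by gcongr
          _ = 1 := mul_inv_cancel₀ hK.ne'
      nlinarith [hderiv_sub s hs0 hhs]
    filter_upwards [(hderiv s).eventually_nhdsGT_lt hneg] with t ht
    exact ht.le.trans hhs
  have key := le_add_mul_add_sq_of_deriv_sub_le (inv_pos.2 hK).le (fun s _ => hderiv s)
    (fun s hs => hderiv_sub s hs.1 (hsub hs))
  simp only [h, zero_smul, sub_zero] at key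
  calc f (x - K⁻¹ • g) ≤ f x + K⁻¹ * -⟪g, g⟫ + K * ‖g‖ ^ 2 * K⁻¹ ^ 2 / 2 := key
    _ = f x - ‖g‖ ^ 2 / (2 * K) := by rw [real_inner_self_eq_norm_sq]; field_simp; ring

theorem sq_sub_le_mul_sub_of_descent (hconv : ConvexOn ℝ univ f)
    (hf : ∀ x, HasGradientAt f (f' x) x) {L R2 : ℝ} (hL : 0 < L) {x y ws : E}
    (hws : ∀ z, f ws ≤ f z) (hR : ‖x - ws‖ ^ 2 ≤ R2)
    (hdesc : f y ≤ f x - ‖f' x‖ ^ 2 / (2 * L)) :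
    (f x - f ws) ^ 2 ≤ 2 * L * R2 * ((f x - f ws) - (f y - f ws)) := by
  have hgap : 0 ≤ f x - f ws := sub_nonneg.2 (hws x)
  have hgrad : ‖f' x‖ ^ 2 ≤ 2 * L * (f x - f y) := by
    have : ‖f' x‖ ^ 2 / (2 * L) ≤ f x - f y := by linarith
    rwa [div_le_iff₀ (by positivity), mul_comm] at this
  calc (f x - f ws) ^ 2 ≤ (‖f' x‖ * ‖x - ws‖) ^ 2 :=
        pow_le_pow_left₀ hgap (sub_le_norm_gradient_mul_norm_sub hconv (hf x) ws) 2
    _ = ‖f' x‖ ^ 2 * ‖x - ws‖ ^ 2 := mul_pow _ _ _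
    _ ≤ 2 * L * (f x - f y) * R2 := by gcongr; exact (sq_nonneg _).trans hgrad
    _ = 2 * L * R2 * ((f x - f ws) - (f y - f ws)) := by ring

end InnerProductSpace

section Radius

variable {E : Type*} [NormedAddCommGroup E]

/-- The paper's `R²(ρ)`. For non-coercive `f` the set can be unbounded, and then `sSup` is the
junk value `0`. -/
noncomputable def minimizerRadiusSq (f : E → ℝ) (ρ : ℝ) : ℝ :=
  sSup {r : ℝ | ∃ u wstar : E, f u ≤ ρ ∧ (∀ x, f wstar ≤ f x) ∧ r = ‖u - wstar‖ ^ 2}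

theorem sq_norm_sub_le_minimizerRadiusSq {f : E → ℝ}
    (hf : Tendsto f (comap norm atTop) atTop) {ρ : ℝ} {u ws : E} (hu : f u ≤ ρ)
    (hws : ∀ x, f ws ≤ f x) : ‖u - ws‖ ^ 2 ≤ minimizerRadiusSq f ρ := by
  have hbdd : Bornology.IsBounded {x | f x ≤ ρ} := by
    rw [comap_norm_atTop] at hf
    rw [Bornology.isBounded_def]
    filter_upwards [hf.eventually_gt_atTop ρ] with x hx using not_le.2 hx
  obtain ⟨C, hC⟩ := Metric.isBounded_iff.1 hbdd
  refine le_csSup ⟨C ^ 2, ?_⟩ ⟨u, ws, hu, hws, rfl⟩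
  rintro _ ⟨v, vs, hv, hvs, rfl⟩
  rw [← dist_eq_norm]
  exact pow_le_pow_left₀ dist_nonneg (hC hv ((hvs u).trans hu)) 2

end Radius

section Sequences

open Real

theorem nat_mul_le_of_sq_le_mul_sub {u : ℕ → ℝ} {A : ℝ} (hA : 0 ≤ A) (hu : ∀ t, 0 ≤ u t)
    (hanti : Antitone u) (hstep : ∀ t, u t ^ 2 ≤ A * (u t - u (t + 1))) (t : ℕ) :
    t * u t ≤ A := by
  induction t with
  | zero => simpa using hA
  | succ t ih =>
    rcases (hu t).eq_or_lt with ht | ht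
    · have : u (t + 1) = 0 := le_antisymm (ht ▸ hanti t.le_succ) (hu _)
      simpa [this] using hA
    -- `1 / u (t + 1) ≥ 1 / u t + 1 / A ≥ (t + 1) / A`, with denominators cleared.
    have hprod : (t + 1) * u t * u (t + 1) ≤ A * u t := by
      nlinarith [hstep t, hanti t.le_succ, hu (t + 1), mul_le_mul_of_nonneg_right ih (hu (t + 1))]
    push_cast
    nlinarith

theorem le_exp_neg_mul_of_le_one_sub_mul {u : ℕ → ℝ} {q δ : ℝ} (hq : 0 ≤ q)
    (hu : ∀ t, 0 ≤ u t) (hstep : ∀ t, u t ≤ δ → u (t + 1) ≤ (1 - q) * u t) {n : ℕ}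
    (hn : u n ≤ δ) (k : ℕ) : u (n + k) ≤ exp (-(q * k)) * δ := by
  have hδ : 0 ≤ δ := (hu n).trans hn
  induction k with
  | zero => simpa using hn
  | succ k ih =>
    have hle : u (n + k) ≤ δ :=
      ih.trans (mul_le_of_le_one_left hδ (exp_le_one_iff.2 (neg_nonpos.2 (by positivity))))
    calc u (n + (k + 1)) ≤ (1 - q) * u (n + k) := hstep _ hle
      _ ≤ exp (-q) * u (n + k) := by
          gcongr
          · exact hu _
          · linarith [add_one_le_exp (-q)]
      _ ≤ exp (-q) * (exp (-(q * k)) * δ) := by gcongr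
      _ = exp (-(q * ↑(k + 1))) * δ := by
          rw [← mul_assoc, ← exp_add]; push_cast; ring_nf

theorem le_of_sublinear_then_linear {u : ℕ → ℝ} {A q δ ε : ℝ} (hq : 0 < q) (hε : 0 < ε)
    (hεδ : ε ≤ δ) (hδu : δ < u 0) (hu : ∀ t, 0 ≤ u t) (hanti : Antitone u)
    (hsub : ∀ t, u t ^ 2 ≤ A * (u t - u (t + 1)))
    (hlin : ∀ t, u t ≤ δ → u (t + 1) ≤ (1 - q) * u t) {T : ℕ}
    (hT : 2 * A / δ + log (δ / ε) / q ≤ T) : u T ≤ ε := by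
  have hδ : 0 < δ := hε.trans_le hεδ
  -- The first step forces `u 0 ≤ A`.
  have hδA : δ < A := by
    have hu0 : 0 < u 0 := hδ.trans hδu
    have hdrop : u 1 ≤ u 0 := hanti (zero_le_one' ℕ)
    have hA : 0 < A := by nlinarith [hsub 0, hu 1]
    nlinarith [hsub 0, hu 1]
  set n := ⌈A / δ⌉₊
  have hAn : A ≤ n * δ := (div_le_iff₀ hδ).1 (Nat.le_ceil _)
  have hn : u n ≤ δ := by
    have hnpos : (0 : ℝ) < n := by nlinarith
    have := nat_mul_le_of_sq_le_mul_sub (hδ.trans hδA).le hu hanti hsub n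
    exact le_of_mul_le_mul_left (by linarith) hnpos
  have hlog : 0 ≤ log (δ / ε) / q :=
    div_nonneg (log_nonneg ((one_le_div hε).2 hεδ)) hq.le
  have hnT : (n : ℝ) + log (δ / ε) / q ≤ T := by
    have : (n : ℝ) < A / δ + 1 := Nat.ceil_lt_add_one (div_pos (hδ.trans hδA) hδ).le
    have : 1 < A / δ := (one_lt_div hδ).2 hδA
    have : 2 * A / δ = 2 * (A / δ) := by ring
    linarith
  obtain ⟨k, rfl⟩ := Nat.exists_eq_add_of_le (by exact_mod_cast (by linarith : (n : ℝ) ≤ T))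
  calc u (n + k) ≤ exp (-(q * k)) * δ := le_exp_neg_mul_of_le_one_sub_mul hq.le hu hlin hn k
    _ ≤ exp (-log (δ / ε)) * δ := by
        have : log (δ / ε) / q ≤ k := by push_cast at hnT; linarith
        rw [div_le_iff₀' hq] at this
        gcongr
    _ = ε := by rw [exp_neg, exp_log (by positivity)]; field_simp

end Sequences

/-- Iteration complexity of gradient descent with exact line optimization
for globally convex, coercive, glocally (L, L_*, δ)-smooth functions that are
μ_*-strongly convex on the δ-sublevel set, up to absolute constants C₁, C₂. -/
theorem gd_lo_convex_locally_strongly_convex_complexity :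
    ∃ C₁ C₂ : ℝ, 0 < C₁ ∧ 0 < C₂ ∧
    ∀ (d : ℕ) (f : EuclideanSpace ℝ (Fin d) → ℝ)
      (f' : EuclideanSpace ℝ (Fin d) → EuclideanSpace ℝ (Fin d))
      (L Ls δ ε μs fstar : ℝ)
      (w : ℕ → EuclideanSpace ℝ (Fin d)),
      0 < L → 0 < Ls → 0 < μs →
      (∀ x, HasGradientAt f (f' x) x) →
      ConvexOn ℝ Set.univ f →
      Filter.Tendsto f (Filter.comap norm Filter.atTop) Filter.atTop →
      (∀ u v, ‖f' u - f' v‖ ≤ L * ‖u - v‖) →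
      (∀ u v, f u - fstar ≤ δ → f v - fstar ≤ δ → ‖f' u - f' v‖ ≤ Ls * ‖u - v‖) →
      (∀ u v, f u - fstar ≤ δ → f v - fstar ≤ δ →
        f v ≥ f u + ⟪f' u, v - u⟫ + μs / 2 * ‖v - u‖ ^ 2) →
      (∃ wstar, f wstar = fstar ∧ ∀ x, fstar ≤ f x) →
      f (w 0) - fstar > δ → δ > ε → ε > 0 →
      (∀ t : ℕ,
        (∃ η : ℝ, w (t + 1) = w t - η • f' (w t)) ∧
          ∀ η : ℝ, f (w (t + 1)) ≤ f (w t - η • f' (w t))) →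
      ∀ T : ℕ,
        C₁ * (L / δ) *
            sSup {r : ℝ | ∃ u wstar : EuclideanSpace ℝ (Fin d),
              f u ≤ f (w 0) ∧ (∀ x, f wstar ≤ f x) ∧ r = ‖u - wstar‖ ^ 2} +
          C₂ * (Ls / μs) * Real.log (δ / ε) ≤ T →
        f (w T) - fstar ≤ ε := by
  refine ⟨4, 1, by norm_num, by norm_num, ?_⟩
  intro d f f' L Ls δ ε μs fstar w hL hLs hμs hgrad hconv hcoer hglob hloc hsc hmin hΔ0 hδε hε
    hls T hT
  obtain ⟨ws, rfl, hws⟩ := hmin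
  have hstep : ∀ K, 0 < K → ∀ t, (∀ u, f u ≤ f (w t) → ‖f' u - f' (w t)‖ ≤ K * ‖u - w t‖) →
      f (w (t + 1)) ≤ f (w t) - ‖f' (w t)‖ ^ 2 / (2 * K) := fun K hK t hlip =>
    ((hls t).2 K⁻¹).trans (apply_sub_inv_smul_gradient_le hgrad hK hlip)
  have hanti : Antitone fun t => f (w t) :=
    antitone_nat_of_succ_le fun t => by simpa using (hls t).2 0
  set R2 := minimizerRadiusSq f (f (w 0))
  refine le_of_sublinear_then_linear (A := 2 * L * R2) (div_pos hμs hLs) hε hδε.le hΔ0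
    (fun t => sub_nonneg.2 (hws _)) (fun s t hst => sub_le_sub_right (hanti hst) _)
    (fun t => sq_sub_le_mul_sub_of_descent hconv hgrad hL hws
      (sq_norm_sub_le_minimizerRadiusSq hcoer (hanti (Nat.zero_le t)) hws)
      (hstep L hL t fun u _ => hglob u (w t)))
    (fun t ht => sub_le_one_sub_mul_of_descent hμs hLs
      (hsc (w t) ws ht (by rw [sub_self]; linarith))
      (hstep Ls hLs t fun u hu => hloc u (w t) (by linarith) ht)) ?_
  have hR2 : 2 * (2 * L * R2) / δ + Real.log (δ / ε) / (μs / Ls) =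
      4 * (L / δ) * R2 + 1 * (Ls / μs) * Real.log (δ / ε) := by
    field_simp
    ring
  rw [hR2]
  exact hT
end

section
/- Let f : ℝ^d → ℝ be differentiable, coordinate-wise glocally (L, L_*, δ)-smooth, and μ₁-strongly convex in the 1-norm: f(v) ≥ f(u) + ⟨∇f(u), v − u⟩ + (μ₁/2)‖v − u‖₁² for all u, v. Assume Δ₀ = f(w₀) − f_* > δ > ε > 0. Let (w_t) be greedy coordinate descent: at each t choose j_t ∈ argmax_j |∇_{j}f(w_t)| and set w_{t+1} = w_t − η_t∇_{j_t}f(w_t)e_{j_t}, where η_t is chosen by exact coordinate line optimization, i.e. f(w_{t+1}) ≤ f(w_t − η∇_{j_t}f(w_t)e_{j_t}) for all η ∈ ℝ. Then f(w_T) − f_* ≤ ε for every natural number T with T ≥ ⌈(L/μ₁)log(Δ₀/δ)⌉ + ⌈(L_*/μ₁)log(δ/ε)⌉. -/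
open scoped RealInnerProductSpace

/-!
Exact line search along the greedy coordinate `j` does at least as well as the step
`-∇_j f / K`, and this step decreases `f` by `(∇_j f)² / (2K)` as soon as `∇_j f` is
`K`-Lipschitz on the part of the coordinate line below the current value: comparing `f` along
the line with the parabola `f u + ∇_j f(u) r + K r² / 2` shows that the segment up to the step
never leaves that sublevel set, so inside `{f - f_* ≤ δ}` the local constant `L_*` may be used.
Strong convexity in `ℓ₁` and the greedy choice give `2 μ₁ (f - f_*) ≤ max_j (∇_j f)²`, so each
step contracts the gap by `exp (-μ₁ / L)`, and by `exp (-μ₁ / L_*)` once the gap is below `δ`.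
The gap is monotone, so the first phase needs `⌈(L/μ₁) log (Δ₀/δ)⌉` steps and the second
`⌈(L_*/μ₁) log (δ/ε)⌉`.
-/

open Set Real

section LineDescent

variable {φ φ' : ℝ → ℝ} {K : ℝ}

/- The slack `ε` makes the derivative comparison strict at a contact point, as the fencing
theorem `image_le_of_deriv_right_lt_deriv_boundary` requires. -/
lemma le_quadratic_add_mul_of_lipschitzOnSublevel (hφ : ∀ r, HasDerivAt φ (φ' r) r)
    (hK : 0 < K) (hlip : ∀ r, φ r ≤ φ 0 → |φ' r - φ' 0| ≤ K * |r|) {ε : ℝ} (hε : 0 < ε)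
    (hεg : ε ≤ -φ' 0 / 2) {x : ℝ} (hx : x ∈ Icc 0 (-φ' 0 / K)) :
    φ x ≤ φ 0 + (φ' 0 + ε) * x + K / 2 * x ^ 2 := by
  refine image_le_of_deriv_right_lt_deriv_boundary
    (B := fun x => φ 0 + (φ' 0 + ε) * x + K / 2 * x ^ 2) (B' := fun x => φ' 0 + ε + K * x)
    (fun x _ => (hφ x).continuousAt.continuousWithinAt) (fun x _ => (hφ x).hasDerivWithinAt)
    (by simp) (fun x => ?_) (fun x hx hφB => ?_) hx
  · exact ((((hasDerivAt_id' x).const_mul (φ' 0 + ε)).const_add (φ 0)).add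
      ((hasDerivAt_pow 2 x).const_mul (K / 2))).congr_deriv (by ring)
  · obtain ⟨hx0, hxg⟩ := hx
    have hKx : K * x ≤ -φ' 0 := by rw [lt_div_iff₀ hK, mul_comm] at hxg; exact hxg.le
    have hsub : φ x ≤ φ 0 := by rw [hφB]; nlinarith
    have := (abs_le.1 (hlip x hsub)).2
    rw [abs_of_nonneg hx0] at this
    linarith

lemma le_quadratic_of_lipschitzOnSublevel (hφ : ∀ r, HasDerivAt φ (φ' r) r)
    (hK : 0 < K) (hlip : ∀ r, φ r ≤ φ 0 → |φ' r - φ' 0| ≤ K * |r|) (hg : φ' 0 < 0)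
    {x : ℝ} (hx : x ∈ Icc 0 (-φ' 0 / K)) :
    φ x ≤ φ 0 + φ' 0 * x + K / 2 * x ^ 2 := by
  refine le_of_forall_pos_le_add fun η hη => ?_
  set ε := min (-φ' 0 / 2) (η / (x + 1))
  have hε : 0 < ε := lt_min (by linarith) (by have := hx.1; positivity)
  have hεx : ε * (x + 1) ≤ η := (le_div_iff₀ (by linarith [hx.1])).1 (min_le_right _ _)
  have := le_quadratic_add_mul_of_lipschitzOnSublevel hφ hK hlip hε (min_le_left _ _) hx
  nlinarith

lemma le_sub_sq_div_of_lipschitzOnSublevel (hφ : ∀ r, HasDerivAt φ (φ' r) r)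
    (hK : 0 < K) (hlip : ∀ r, φ r ≤ φ 0 → |φ' r - φ' 0| ≤ K * |r|) :
    φ (-(φ' 0 / K)) ≤ φ 0 - φ' 0 ^ 2 / (2 * K) := by
  rcases lt_trichotomy (φ' 0) 0 with hg | hg | hg
  · have := le_quadratic_of_lipschitzOnSublevel hφ hK hlip hg (x := -(φ' 0 / K))
      ⟨by have := div_neg_of_neg_of_pos hg hK; linarith, by rw [neg_div]⟩
    convert this using 1
    field_simp
    ring
  · simp [hg]
  · have hψ : ∀ r, HasDerivAt (fun r => φ (-r)) (-φ' (-r)) r := fun r => by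
      simpa [Function.comp_def] using (hφ (-r)).comp r (hasDerivAt_id r).neg
    have := le_quadratic_of_lipschitzOnSublevel hψ hK (fun r hr => by
      simpa [abs_sub_comm, neg_add_eq_sub] using hlip (-r) (by simpa using hr)) (by simpa using hg)
      (x := φ' 0 / K) ⟨by positivity, by simp⟩
    simp only [neg_zero] at this
    convert this using 1
    field_simp
    ring

end LineDescent

section Coordinate

variable {ι : Type*} [Fintype ι]

lemma abs_inner_le_mul_sum_abs {x y : EuclideanSpace ℝ ι} {G : ℝ} (hx : ∀ i, |x i| ≤ G) :
    |⟪x, y⟫| ≤ G * ∑ i, |y i| := by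
  rw [PiLp.inner_apply, Finset.mul_sum]
  refine (Finset.abs_sum_le_sum_abs _ _).trans (Finset.sum_le_sum fun i _ => ?_)
  rw [RCLike.inner_apply, conj_trivial, abs_mul, mul_comm]
  exact mul_le_mul_of_nonneg_right (hx i) (abs_nonneg _)

lemma two_mul_sub_le_sq_of_strongConvex_l1 {f : EuclideanSpace ℝ ι → ℝ}
    {g u v : EuclideanSpace ℝ ι} {μ G : ℝ} (hμ : 0 < μ)
    (hsc : f v ≥ f u + ⟪g, v - u⟫ + μ / 2 * (∑ i, |v i - u i|) ^ 2) (hG : ∀ i, |g i| ≤ G) :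
    2 * μ * (f u - f v) ≤ G ^ 2 := by
  have hinner := (abs_le.1 (abs_inner_le_mul_sum_abs (y := v - u) hG)).1
  simp only [PiLp.sub_apply] at hinner
  nlinarith [sq_nonneg (μ * ∑ i, |v i - u i| - G)]

variable [DecidableEq ι] {f : EuclideanSpace ℝ ι → ℝ}
  {f' : EuclideanSpace ℝ ι → EuclideanSpace ℝ ι}

lemma hasDerivAt_add_smul_single_of_hasGradientAt (hdiff : ∀ x, HasGradientAt f (f' x) x)
    (u : EuclideanSpace ℝ ι) (j : ι) (r : ℝ) :
    HasDerivAt (fun r : ℝ => f (u + r • EuclideanSpace.single j 1))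
      (f' (u + r • EuclideanSpace.single j 1) j) r := by
  have hline : HasDerivAt (fun r : ℝ => u + r • EuclideanSpace.single j (1 : ℝ))
      (EuclideanSpace.single j 1) r := by
    simpa using ((hasDerivAt_id r).smul_const (EuclideanSpace.single j (1 : ℝ))).const_add u
  simpa [InnerProductSpace.toDual_apply_apply, EuclideanSpace.inner_single_right,
    Function.comp_def] using (hdiff _).hasFDerivAt.comp_hasDerivAt r hline

lemma le_sub_sq_div_of_coord_lipschitzOnSublevel (hdiff : ∀ x, HasGradientAt f (f' x) x)
    {K : ℝ} (hK : 0 < K) (u : EuclideanSpace ℝ ι) (j : ι)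
    (hlip : ∀ α : ℝ, f (u + α • EuclideanSpace.single j 1) ≤ f u →
      |f' (u + α • EuclideanSpace.single j 1) j - f' u j| ≤ K * |α|) :
    f (u - (1 / K * f' u j) • EuclideanSpace.single j 1) ≤ f u - f' u j ^ 2 / (2 * K) := by
  have := le_sub_sq_div_of_lipschitzOnSublevel
    (hasDerivAt_add_smul_single_of_hasGradientAt hdiff u j) hK (by simpa using hlip)
  simp only [zero_smul, add_zero, neg_smul, ← sub_eq_add_neg] at this
  rwa [one_div_mul_eq_div]

end Coordinate

lemma sub_le_exp_mul_of_descent {a b m g μ C : ℝ} (hC : 0 < C) (ha : m ≤ a)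
    (hdesc : b ≤ a - g ^ 2 / (2 * C)) (hpl : 2 * μ * (a - m) ≤ g ^ 2) :
    b - m ≤ exp (-(μ / C)) * (a - m) := by
  have hgap : μ / C * (a - m) ≤ g ^ 2 / (2 * C) := by
    rw [div_mul_eq_mul_div, div_le_div_iff₀ hC (by positivity)]
    nlinarith
  nlinarith [add_one_le_exp (-(μ / C))]

lemma exp_neg_div_pow_mul_le {μ C X Y : ℝ} (hμ : 0 < μ) (hC : 0 < C) (hX : 0 < X) (hY : 0 < Y)
    {N : ℕ} (hN : C / μ * log (X / Y) ≤ N) : exp (-(μ / C)) ^ N * X ≤ Y := by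
  rw [← exp_nat_mul, ← le_div_iff₀ hX, ← exp_log (div_pos hY hX), exp_le_exp,
    log_div hY.ne' hX.ne']
  rw [log_div hX.ne' hY.ne', div_mul_eq_mul_div, div_le_iff₀ hμ] at hN
  rw [mul_neg, ← mul_div_assoc, neg_le, le_div_iff₀ hC]
  linarith

lemma le_of_two_phase_contraction_s10 {e : ℕ → ℝ} {q₁ q₂ δ ε : ℝ} (he : ∀ t, 0 ≤ e t)
    (hq₁ : q₁ ∈ Icc 0 1) (hq₂ : 0 ≤ q₂) (h₁ : ∀ t, e (t + 1) ≤ q₁ * e t)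
    (h₂ : ∀ t, e t ≤ δ → e (t + 1) ≤ q₂ * e t) {N₁ N₂ T : ℕ} (hN₁ : q₁ ^ N₁ * e 0 ≤ δ)
    (hN₂ : q₂ ^ N₂ * δ ≤ ε) (hT : N₁ + N₂ ≤ T) : e T ≤ ε := by
  have he_anti : Antitone e := antitone_nat_of_succ_le fun t =>
    (h₁ t).trans (mul_le_of_le_one_left (he t) hq₁.2)
  have hphase₁ : e N₁ ≤ δ := (le_geom hq₁.1 N₁ fun k _ => h₁ k).trans hN₁
  have hphase₂ : e (N₁ + N₂) ≤ q₂ ^ N₂ * e N₁ :=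
    le_geom (u := fun k => e (N₁ + k)) hq₂ N₂ fun k _ =>
      h₂ _ ((he_anti (Nat.le_add_right N₁ k)).trans hphase₁)
  calc e T ≤ e (N₁ + N₂) := he_anti hT
    _ ≤ q₂ ^ N₂ * δ := hphase₂.trans (mul_le_mul_of_nonneg_left hphase₁ (pow_nonneg hq₂ _))
    _ ≤ ε := hN₂

lemma exists_add_le_of_ceil_add_ceil_le {a b : ℝ} (ha : 0 ≤ a) (hb : 0 ≤ b) {T : ℕ}
    (hT : ⌈a⌉ + ⌈b⌉ ≤ (T : ℤ)) : ∃ N₁ N₂ : ℕ, a ≤ N₁ ∧ b ≤ N₂ ∧ N₁ + N₂ ≤ T :=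
  ⟨⌈a⌉₊, ⌈b⌉₊, Nat.le_ceil a, Nat.le_ceil b, by
    rw [← Int.natCast_ceil_eq_ceil ha, ← Int.natCast_ceil_eq_ceil hb] at hT; exact_mod_cast hT⟩

/-- Iteration complexity of greedy coordinate descent with exact coordinate
line optimization under coordinate-wise glocal (L, L_*, δ)-smoothness and μ₁-strong
convexity in the 1-norm. -/
theorem greedy_cd_glocal_complexity {d : ℕ}
    (f : EuclideanSpace ℝ (Fin d) → ℝ)
    (f' : EuclideanSpace ℝ (Fin d) → EuclideanSpace ℝ (Fin d))
    (L Ls δ ε μ₁ fstar : ℝ)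
    (hL : 0 < L) (hLs : 0 < Ls) (hμ₁ : 0 < μ₁)
    (hdiff : ∀ x, HasGradientAt f (f' x) x)
    (hglob : ∀ (u : EuclideanSpace ℝ (Fin d)) (j : Fin d) (α : ℝ),
      |f' (u + α • EuclideanSpace.single j (1 : ℝ)) j - f' u j| ≤ L * |α|)
    (hloc : ∀ (u : EuclideanSpace ℝ (Fin d)) (j : Fin d) (α : ℝ),
      f u - fstar ≤ δ → f (u + α • EuclideanSpace.single j (1 : ℝ)) - fstar ≤ δ →
      |f' (u + α • EuclideanSpace.single j (1 : ℝ)) j - f' u j| ≤ Ls * |α|)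
    (hsc : ∀ u v : EuclideanSpace ℝ (Fin d),
      f v ≥ f u + ⟪f' u, v - u⟫ + μ₁ / 2 * (∑ i, |v i - u i|) ^ 2)
    (hmin : ∃ wstar, f wstar = fstar ∧ ∀ x, fstar ≤ f x)
    (w : ℕ → EuclideanSpace ℝ (Fin d)) (jt : ℕ → Fin d)
    (hΔδ : f (w 0) - fstar > δ) (hδε : δ > ε) (hε : ε > 0)
    (hgreedy : ∀ (t : ℕ) (j : Fin d), |f' (w t) j| ≤ |f' (w t) (jt t)|)
    (hstep : ∀ t : ℕ,
      (∃ η : ℝ, w (t + 1) =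
        w t - (η * f' (w t) (jt t)) • EuclideanSpace.single (jt t) (1 : ℝ)) ∧
      ∀ η : ℝ, f (w (t + 1)) ≤
        f (w t - (η * f' (w t) (jt t)) • EuclideanSpace.single (jt t) (1 : ℝ))) :
    ∀ T : ℕ,
      (⌈L / μ₁ * Real.log ((f (w 0) - fstar) / δ)⌉ + ⌈Ls / μ₁ * Real.log (δ / ε)⌉ : ℤ) ≤ T →
      f (w T) - fstar ≤ ε := by
  intro T hT
  obtain ⟨wstar, hfstar, hfstar_le⟩ := hmin
  have hδ : 0 < δ := hε.trans hδε
  have hpl : ∀ t, 2 * μ₁ * (f (w t) - fstar) ≤ f' (w t) (jt t) ^ 2 := fun t => by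
    simpa [hfstar, sq_abs] using
      two_mul_sub_le_sq_of_strongConvex_l1 hμ₁ (hsc (w t) wstar) (hgreedy t)
  have hcontract : ∀ t K, 0 < K →
      (∀ α : ℝ, f (w t + α • EuclideanSpace.single (jt t) 1) ≤ f (w t) →
        |f' (w t + α • EuclideanSpace.single (jt t) 1) (jt t) - f' (w t) (jt t)| ≤ K * |α|) →
      f (w (t + 1)) - fstar ≤ exp (-(μ₁ / K)) * (f (w t) - fstar) := fun t K hK hlip =>
    sub_le_exp_mul_of_descent hK (hfstar_le _) (((hstep t).2 (1 / K)).trans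
      (le_sub_sq_div_of_coord_lipschitzOnSublevel hdiff hK _ _ hlip)) (hpl t)
  obtain ⟨N₁, N₂, hN₁, hN₂, hNT⟩ := exists_add_le_of_ceil_add_ceil_le
    (mul_nonneg (div_pos hL hμ₁).le (log_nonneg ((one_le_div hδ).2 hΔδ.le)))
    (mul_nonneg (div_pos hLs hμ₁).le (log_nonneg ((one_le_div hε).2 hδε.le))) hT
  exact le_of_two_phase_contraction_s10 (fun t => sub_nonneg.2 (hfstar_le _))
    ⟨(exp_pos _).le, exp_le_one_iff.2 (neg_nonpos.2 (div_pos hμ₁ hL).le)⟩ (exp_pos _).le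
    (fun t => hcontract t L hL fun α _ => hglob _ _ α)
    (fun t ht => hcontract t Ls hLs fun α hα => hloc _ _ α ht (by linarith))
    (exp_neg_div_pow_mul_le hμ₁ hL (hδ.trans hΔδ) hδ hN₁)
    (exp_neg_div_pow_mul_le hμ₁ hLs hδ hε hN₂) hNT
end

section
/- Let f = ∑_{i=1}^n f_i where each f_i : ℝ^d → ℝ is convex and differentiable with L_max-Lipschitz gradient. Suppose w_* is a minimizer of f satisfying the interpolation property: ∇f_i(w_*) = 0 for every i ∈ {1,…,n}. Then for every w ∈ ℝ^d, every index i, and every step size 0 ≤ η ≤ 1/L_max, the stochastic gradient step satisfies ‖w − η∇f_i(w) − w_*‖ ≤ ‖w − w_*‖; that is, each stochastic gradient descent step with a sufficiently small step size deterministically moves the iterate no farther from the minimizer. -/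
/-!
Write `g = ∇fᵢ(w)` and `L = Lmax`. Since `∇fᵢ(w⋆) = 0`, convexity makes `w⋆` a global minimiser
of `fᵢ`. The descent lemma for an `L`-smooth function, applied at the gradient step
`w - g / L`, then gives `‖g‖² / (2L) ≤ fᵢ(w) - fᵢ(w⋆)`, and the first-order convexity inequality
bounds the right side by `⟪g, w - w⋆⟫`. Finally
`‖(w - w⋆) - η g‖² = ‖w - w⋆‖² - η (2 ⟪g, w - w⋆⟫ - η ‖g‖²)`, and the bracket is nonnegative
as soon as `η ≤ 1 / L`.
-/

open Set AffineMap
open scoped RealInnerProductSpace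

section SmoothConvex

variable {E : Type*} [NormedAddCommGroup E] [InnerProductSpace ℝ E]

theorem norm_sub_smul_le_norm_of_mul_sq_norm_le_inner {g v : E} {η : ℝ} (hη : 0 ≤ η)
    (h : η * ‖g‖ ^ 2 ≤ 2 * ⟪g, v⟫) : ‖v - η • g‖ ≤ ‖v‖ := by
  have hsq : ‖v - η • g‖ ^ 2 = ‖v‖ ^ 2 - η * (2 * ⟪g, v⟫ - η * ‖g‖ ^ 2) := by
    rw [norm_sub_sq_real, real_inner_smul_right, norm_smul, Real.norm_of_nonneg hη,
      real_inner_comm]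
    ring
  refine (sq_le_sq₀ (norm_nonneg _) (norm_nonneg _)).1 ?_
  rw [hsq]
  nlinarith

variable [CompleteSpace E] {f : E → ℝ} {f' : E → E} {L : ℝ}

theorem HasGradientAt.hasDerivAt_comp_lineMap {g x y : E} {t : ℝ}
    (hf : HasGradientAt f g (lineMap x y t)) :
    HasDerivAt (f ∘ lineMap x y) ⟪g, y - x⟫ t := by
  simpa using hf.hasFDerivAt.comp_hasDerivAt t hasDerivAt_lineMap

theorem ConvexOn.add_inner_le_of_hasGradientAt {s : Set E} {g x y : E}
    (hconv : ConvexOn ℝ s f) (hx : x ∈ s) (hy : y ∈ s) (hf : HasGradientAt f g x) :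
    f x + ⟪g, y - x⟫ ≤ f y := by
  have hline : ConvexOn ℝ (lineMap (k := ℝ) x y ⁻¹' s) (f ∘ lineMap x y) :=
    hconv.comp_affineMap (lineMap x y)
  have hderiv : HasDerivAt (f ∘ lineMap x y) ⟪g, y - x⟫ (0 : ℝ) :=
    HasGradientAt.hasDerivAt_comp_lineMap (by rwa [lineMap_apply_zero])
  have hslope := hline.le_slope_of_hasDerivAt (by simpa using hx) (by simpa using hy) one_pos hderiv
  simp only [slope_def_field, Function.comp_apply, lineMap_apply_one, lineMap_apply_zero,
    sub_zero, div_one] at hslope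
  linarith

theorem ConvexOn.isMinOn_of_hasGradientAt_zero {x : E}
    (hconv : ConvexOn ℝ univ f) (hf : HasGradientAt f 0 x) : IsMinOn f univ x := fun y _ => by
  simpa using hconv.add_inner_le_of_hasGradientAt (mem_univ x) (mem_univ y) hf

theorem le_add_inner_add_sq_of_lipschitz_gradient
    (hf : ∀ z, HasGradientAt f (f' z) z) (hlip : ∀ u v, ‖f' u - f' v‖ ≤ L * ‖u - v‖) (x y : E) :
    f y ≤ f x + ⟪f' x, y - x⟫ + L / 2 * ‖y - x‖ ^ 2 := by
  set h : ℝ → ℝ := fun t => f (lineMap x y t) - t * ⟪f' x, y - x⟫ - L / 2 * t ^ 2 * ‖y - x‖ ^ 2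
  have hderiv : ∀ t, HasDerivAt h
      (⟪f' (lineMap x y t) - f' x, y - x⟫ - L * t * ‖y - x‖ ^ 2) t := fun t =>
    (((hf (lineMap x y t)).hasDerivAt_comp_lineMap.sub
      ((hasDerivAt_id t).mul_const ⟪f' x, y - x⟫)).sub
      (((hasDerivAt_pow 2 t).const_mul (L / 2)).mul_const (‖y - x‖ ^ 2))).congr_deriv
      (by rw [inner_sub_left]; ring)
  have hderiv_nonpos (t : ℝ) (ht : 0 ≤ t) :
      ⟪f' (lineMap x y t) - f' x, y - x⟫ - L * t * ‖y - x‖ ^ 2 ≤ 0 := by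
    have hdist : ‖lineMap x y t - x‖ = t * ‖y - x‖ := by
      rw [← vsub_eq_sub, lineMap_vsub_left, norm_smul, Real.norm_of_nonneg ht, vsub_eq_sub]
    rw [sub_nonpos]
    calc ⟪f' (lineMap x y t) - f' x, y - x⟫
        ≤ ‖f' (lineMap x y t) - f' x‖ * ‖y - x‖ := real_inner_le_norm _ _
      _ ≤ L * ‖lineMap x y t - x‖ * ‖y - x‖ := by gcongr; exact hlip _ _
      _ = L * t * ‖y - x‖ ^ 2 := by rw [hdist]; ring
  have hanti : AntitoneOn h (Ici 0) :=
    antitoneOn_of_hasDerivWithinAt_nonpos (convex_Ici 0)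
      (fun t _ => (hderiv t).continuousAt.continuousWithinAt)
      (fun t _ => (hderiv t).hasDerivWithinAt)
      (fun t ht => hderiv_nonpos t (le_of_lt (by simpa using ht)))
  have hends := hanti (mem_Ici.2 le_rfl) (mem_Ici.2 zero_le_one) zero_le_one
  simp only [h, lineMap_apply_one, lineMap_apply_zero] at hends
  linarith

theorem IsMinOn.sq_norm_div_le_sub_of_lipschitz_gradient {xmin : E} (hmin : IsMinOn f univ xmin)
    (hL : 0 < L) (hf : ∀ z, HasGradientAt f (f' z) z)
    (hlip : ∀ u v, ‖f' u - f' v‖ ≤ L * ‖u - v‖) (x : E) :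
    ‖f' x‖ ^ 2 / (2 * L) ≤ f x - f xmin := by
  have hdescent := le_add_inner_add_sq_of_lipschitz_gradient hf hlip x (x - L⁻¹ • f' x)
  have hgain : ⟪f' x, x - L⁻¹ • f' x - x⟫ + L / 2 * ‖x - L⁻¹ • f' x - x‖ ^ 2
      = -(‖f' x‖ ^ 2 / (2 * L)) := by
    rw [sub_sub_cancel_left, inner_neg_right, real_inner_smul_right, real_inner_self_eq_norm_sq,
      norm_neg, norm_smul, Real.norm_of_nonneg (inv_nonneg.2 hL.le)]
    field_simp
    ring
  have hle : f xmin ≤ f (x - L⁻¹ • f' x) := hmin (mem_univ _)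
  linarith

theorem ConvexOn.sq_norm_div_le_inner_sub_of_gradient_eq_zero {xmin : E}
    (hconv : ConvexOn ℝ univ f) (hL : 0 < L) (hf : ∀ z, HasGradientAt f (f' z) z)
    (hlip : ∀ u v, ‖f' u - f' v‖ ≤ L * ‖u - v‖) (hzero : f' xmin = 0) (x : E) :
    ‖f' x‖ ^ 2 / (2 * L) ≤ ⟪f' x, x - xmin⟫ := by
  have hmin := hconv.isMinOn_of_hasGradientAt_zero (hzero ▸ hf xmin)
  have hfirst := hconv.add_inner_le_of_hasGradientAt (mem_univ x) (mem_univ xmin) (hf x)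
  rw [← neg_sub, inner_neg_right] at hfirst
  linarith [hmin.sq_norm_div_le_sub_of_lipschitz_gradient hL hf hlip x]

end SmoothConvex

theorem sgd_step_nonexpansive_interpolation_general {d n : ℕ}
    (fi : Fin n → EuclideanSpace ℝ (Fin d) → ℝ)
    (fi' : Fin n → EuclideanSpace ℝ (Fin d) → EuclideanSpace ℝ (Fin d))
    (Lmax : ℝ) (hLmax : 0 < Lmax)
    (hdiff : ∀ (i : Fin n) (x : EuclideanSpace ℝ (Fin d)), HasGradientAt (fi i) (fi' i x) x)
    (hconv : ∀ i, ConvexOn ℝ Set.univ (fi i))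
    (hlip : ∀ (i : Fin n) (u v : EuclideanSpace ℝ (Fin d)),
      ‖fi' i u - fi' i v‖ ≤ Lmax * ‖u - v‖)
    (wstar : EuclideanSpace ℝ (Fin d))
    (hinterp : ∀ i, fi' i wstar = 0) :
    ∀ (w : EuclideanSpace ℝ (Fin d)) (i : Fin n) (η : ℝ),
      0 ≤ η → η ≤ 1 / Lmax →
      ‖w - η • fi' i w - wstar‖ ≤ ‖w - wstar‖ := by
  intro w i η hη hηL
  have hcoercive := (hconv i).sq_norm_div_le_inner_sub_of_gradient_eq_zero hLmax (hdiff i)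
    (hlip i) (hinterp i) w
  rw [sub_right_comm]
  refine norm_sub_smul_le_norm_of_mul_sq_norm_le_inner hη ?_
  calc η * ‖fi' i w‖ ^ 2 ≤ 1 / Lmax * ‖fi' i w‖ ^ 2 := by gcongr
    _ = 2 * (‖fi' i w‖ ^ 2 / (2 * Lmax)) := by field_simp
    _ ≤ 2 * ⟪fi' i w, w - wstar⟫ := by gcongr

/-- Under interpolation, a stochastic gradient step with step size at most
1/L_max is deterministically nonexpansive with respect to the minimizer. -/
theorem sgd_step_nonexpansive_interpolation {d n : ℕ}
    (fi : Fin n → EuclideanSpace ℝ (Fin d) → ℝ)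
    (fi' : Fin n → EuclideanSpace ℝ (Fin d) → EuclideanSpace ℝ (Fin d))
    (Lmax : ℝ) (hLmax : 0 < Lmax)
    (hdiff : ∀ (i : Fin n) (x : EuclideanSpace ℝ (Fin d)), HasGradientAt (fi i) (fi' i x) x)
    (hconv : ∀ i, ConvexOn ℝ Set.univ (fi i))
    (hlip : ∀ (i : Fin n) (u v : EuclideanSpace ℝ (Fin d)),
      ‖fi' i u - fi' i v‖ ≤ Lmax * ‖u - v‖)
    (wstar : EuclideanSpace ℝ (Fin d))
    (hmin : ∀ x, (∑ i, fi i wstar) ≤ ∑ i, fi i x)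
    (hinterp : ∀ i, fi' i wstar = 0) :
    ∀ (w : EuclideanSpace ℝ (Fin d)) (i : Fin n) (η : ℝ),
      0 ≤ η → η ≤ 1 / Lmax →
      ‖w - η • fi' i w - wstar‖ ≤ ‖w - wstar‖ :=
  sgd_step_nonexpansive_interpolation_general fi fi' Lmax hLmax hdiff hconv hlip wstar hinterp
end

section
/- Let f : ℝ^d → ℝ be differentiable and μ-strongly convex with minimizer w_*, and let y ∈ ℝ^d with ∇f(y) ≠ 0. Then: (i) for every step size η > 1/μ, the Armijo condition fails, i.e. f(y − η∇f(y)) > f(y) − (η/2)‖∇f(y)‖²; hence sup{η > 0 : f(y − η∇f(y)) ≤ f(y) − (η/2)‖∇f(y)‖²} ≤ 1/μ. (ii) If η = 1/μ and f(y − η∇f(y)) ≤ f(y) − (η/2)‖∇f(y)‖², then f(y − η∇f(y)) = f(w_*). -/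
open scoped RealInnerProductSpace

/-- For a μ-strongly convex function, (i) no step size larger than 1/μ can
satisfy the Armijo condition (hence the supremum of Armijo-admissible step sizes is at
most 1/μ), and (ii) if the step size 1/μ satisfies the Armijo condition then the resulting
point attains the minimum value. -/
theorem armijo_max_stepsize_strongly_convex {d : ℕ}
    (f : EuclideanSpace ℝ (Fin d) → ℝ)
    (f' : EuclideanSpace ℝ (Fin d) → EuclideanSpace ℝ (Fin d))
    (μ : ℝ) (hμ : 0 < μ)
    (hdiff : ∀ x, HasGradientAt f (f' x) x)
    (hsc : ∀ u v, f v ≥ f u + ⟪f' u, v - u⟫ + μ / 2 * ‖v - u‖ ^ 2)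
    (wstar : EuclideanSpace ℝ (Fin d))
    (hwstar : ∀ x, f wstar ≤ f x)
    (y : EuclideanSpace ℝ (Fin d)) (hy : f' y ≠ 0) :
    (∀ η : ℝ, 1 / μ < η →
      f (y - η • f' y) > f y - η / 2 * ‖f' y‖ ^ 2) ∧
    sSup {η : ℝ | 0 < η ∧ f (y - η • f' y) ≤ f y - η / 2 * ‖f' y‖ ^ 2} ≤ 1 / μ ∧
    (f (y - (1 / μ) • f' y) ≤ f y - (1 / μ) / 2 * ‖f' y‖ ^ 2 →
      f (y - (1 / μ) • f' y) = f wstar) := by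
  have hgn : 0 < ‖f' y‖ := norm_pos_iff.mpr hy
  have hg : 0 < ‖f' y‖ ^ 2 := by positivity
  have key : ∀ η : ℝ, f y - η * ‖f' y‖ ^ 2 + μ / 2 * η ^ 2 * ‖f' y‖ ^ 2
      ≤ f (y - η • f' y) := by
    intro η
    have h := hsc y (y - η • f' y)
    have e1 : (y - η • f' y) - y = -(η • f' y) := by abel
    rw [e1, inner_neg_right, real_inner_smul_right, real_inner_self_eq_norm_sq,
      norm_neg, norm_smul] at h
    simp only [Real.norm_eq_abs] at h
    rw [mul_pow, sq_abs] at h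
    linarith
  have part1 : ∀ η : ℝ, 1 / μ < η →
      f (y - η • f' y) > f y - η / 2 * ‖f' y‖ ^ 2 := by
    intro η hη
    have hηpos : 0 < η := lt_trans (by positivity) hη
    have h1 : 1 < μ * η := by
      rw [div_lt_iff₀ hμ] at hη; linarith [mul_comm μ η]
    nlinarith [key η, mul_pos (mul_pos hηpos hg) (sub_pos.mpr h1)]
  refine ⟨part1, ?_, ?_⟩
  · apply Real.sSup_le
    · intro x hx
      by_contra hlt
      push_neg at hlt
      exact absurd hx.2 (not_le.mpr (part1 x hlt))
    · positivity
  · intro harm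
    have hmin : f y - 1 / (2 * μ) * ‖f' y‖ ^ 2 ≤ f wstar := by
      have h := hsc y wstar
      have hi : -(‖f' y‖ * ‖wstar - y‖) ≤ ⟪f' y, wstar - y⟫ :=
        neg_le_of_abs_le (abs_real_inner_le_norm _ _)
      have hsq : 0 ≤ (μ * ‖wstar - y‖ - ‖f' y‖) ^ 2 := sq_nonneg _
      have hx0 : (0:ℝ) ≤ 1 / (2 * μ) := by positivity
      have hinv : μ * (1 / (2 * μ)) = 1 / 2 := by field_simp
      nlinarith [h, hi, hsq, mul_nonneg hx0 hsq, hinv, hμ]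
    have harm' : f (y - (1 / μ) • f' y) ≤ f y - 1 / (2 * μ) * ‖f' y‖ ^ 2 := by
      have heq : (1:ℝ) / μ / 2 = 1 / (2 * μ) := by rw [div_div, mul_comm]
      rw [heq] at harm
      exact harm
    have hkey := key (1 / μ)
    have heq2 : f y - (1 / μ) * ‖f' y‖ ^ 2 + μ / 2 * (1 / μ) ^ 2 * ‖f' y‖ ^ 2
        = f y - 1 / (2 * μ) * ‖f' y‖ ^ 2 := by
      field_simp
      ring
    linarith [hwstar (y - (1 / μ) • f' y), harm', hmin]
end

section
/- Let f : ℝ^d → ℝ be differentiable, let μ > 0, let (η_t)_{t≥0} be positive step sizes, and set q_t = η_t·μ. Suppose the sequences (w_t), (y_t), (z_t) satisfy for all t ≥ 0: y_t = w_t + (√q_t/(1+√q_t))(z_t − w_t), w_{t+1} = y_t − η_t∇f(y_t), and z_{t+1} = (1−√q_t)z_t + √q_t(y_t − (1/μ)∇f(y_t)). Then for all t ≥ 1, the extrapolation sequence admits the momentum form y_t = w_t + ((1 − √q_{t-1})/(1 + √q_t))·√(η_t/η_{t-1})·(w_t − w_{t-1}). -/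
/-- The three-sequence form of Nesterov's accelerated gradient method with
variable step sizes is equivalent to the standard momentum formulation. -/
theorem nag_three_sequence_momentum_form {d : ℕ}
    (f : EuclideanSpace ℝ (Fin d) → ℝ)
    (f' : EuclideanSpace ℝ (Fin d) → EuclideanSpace ℝ (Fin d))
    (μ : ℝ) (hμ : 0 < μ)
    (hdiff : ∀ x, HasGradientAt f (f' x) x)
    (w y z : ℕ → EuclideanSpace ℝ (Fin d)) (η : ℕ → ℝ)
    (hηpos : ∀ t : ℕ, 0 < η t)
    (hy : ∀ t : ℕ, y t = w t +
      (Real.sqrt (η t * μ) / (1 + Real.sqrt (η t * μ))) • (z t - w t))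
    (hw : ∀ t : ℕ, w (t + 1) = y t - η t • f' (y t))
    (hz : ∀ t : ℕ, z (t + 1) = (1 - Real.sqrt (η t * μ)) • z t +
      Real.sqrt (η t * μ) • (y t - (1 / μ) • f' (y t))) :
    ∀ t : ℕ, y (t + 1) = w (t + 1) +
      (((1 - Real.sqrt (η t * μ)) / (1 + Real.sqrt (η (t + 1) * μ))) *
        Real.sqrt (η (t + 1) / η t)) • (w (t + 1) - w t) := by
  intro t
  have hpos : ∀ u : ℕ, 0 < η u * μ := fun u => mul_pos (hηpos u) hμ
  have hspos : ∀ u : ℕ, 0 < Real.sqrt (η u * μ) := fun u => Real.sqrt_pos.2 (hpos u)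
  have hssq : ∀ u : ℕ, Real.sqrt (η u * μ) ^ 2 = η u * μ :=
    fun u => Real.sq_sqrt (le_of_lt (hpos u))
  have hratio : Real.sqrt (η (t+1) / η t) =
      Real.sqrt (η (t+1) * μ) / Real.sqrt (η t * μ) := by
    rw [show η (t+1) / η t = (η (t+1) * μ) / (η t * μ) from
        (mul_div_mul_right _ _ (ne_of_gt hμ)).symm,
      Real.sqrt_div (hpos (t+1)).le]
  obtain ⟨a, ha, hapos, hasq⟩ : ∃ a, Real.sqrt (η t * μ) = a ∧ 0 < a ∧ a ^ 2 = η t * μ :=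
    ⟨_, rfl, hspos t, hssq t⟩
  obtain ⟨b, hb, hbpos, hbsq⟩ :
      ∃ b, Real.sqrt (η (t+1) * μ) = b ∧ 0 < b ∧ b ^ 2 = η (t+1) * μ :=
    ⟨_, rfl, hspos (t+1), hssq (t+1)⟩
  have hηt : η t = a ^ 2 / μ := by rw [hasq]; field_simp
  have ha0 : a ≠ 0 := hapos.ne'
  have ha1 : (1:ℝ) + a ≠ 0 := by positivity
  have hb1 : (1:ℝ) + b ≠ 0 := by positivity
  have hμ0 : μ ≠ 0 := hμ.ne'
  rw [hy (t+1), hw t, hz t, hy t, hratio, ha, hb, hηt]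
  match_scalars <;> field_simp <;> ring
end

section
/- Let x_1,…,x_n ∈ ℝ^d, y_1,…,y_n ∈ {−1,+1}, let ℓ(w) = ∑_{i=1}^n log(1 + exp(−y_i⟨x_i, w⟩)) be the binary logistic regression loss, let ℓ_* = inf ℓ, and let X be the n×d matrix with rows x_1ᵀ,…,x_nᵀ with spectral (operator) norm ‖X‖. Then: (i) ‖∇ℓ(u) − ∇ℓ(v)‖ ≤ (1/4)‖X‖²·‖u − v‖ for all u, v ∈ ℝ^d; and (ii) for every δ > 0, ‖∇ℓ(u) − ∇ℓ(v)‖ ≤ (ℓ_* + δ)‖X‖²·‖u − v‖ for all u, v in the sublevel set {w : ℓ(w) − ℓ_* ≤ δ}. In other words, ℓ is glocally ((1/4)‖X‖², (ℓ_* + δ)‖X‖², δ)-smooth for all δ > 0. -/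
/-!
Write `σ` for the sigmoid. The gradient of `ℓ` is `∇ℓ(w) = Xᵀ g(Xw)` with
`g_i(t) = -y_i σ(-y_i t)`, so `‖∇ℓ(u) - ∇ℓ(v)‖ ≤ ‖X‖ ‖g(Xu) - g(Xv)‖ ≤ K ‖X‖² ‖u - v‖` as soon as
each `g_i` is `K`-Lipschitz between `⟨x_i, u⟩` and `⟨x_i, v⟩`. As `y_i² = 1`, the derivative of
`g_i` is `σ(1 - σ)` evaluated at `-y_i t`, which is at most `1/4` everywhere, and also at most
`σ ≤ log (1 + exp)` (from `1 - 1/z ≤ log z`). The latter is monotone, so along the segment it is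
bounded by its values at the endpoints, hence by `max (ℓ u) (ℓ v) ≤ ℓ_* + δ` on the sublevel set.
-/

open scoped RealInnerProductSpace

open Real Set

noncomputable def softplus (s : ℝ) : ℝ := log (1 + exp s)

lemma softplus_nonneg (s : ℝ) : 0 ≤ softplus s :=
  log_nonneg (by linarith [exp_pos s])

lemma softplus_monotone : Monotone softplus := fun _ _ h =>
  log_le_log (by positivity) (by gcongr)

lemma hasDerivAt_softplus (s : ℝ) : HasDerivAt softplus (sigmoid s) s := by
  refine (((hasDerivAt_exp s).const_add 1).log (by positivity)).congr_deriv ?_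
  rw [sigmoid_def, exp_neg]
  field_simp
  ring

lemma sigmoid_le_softplus (s : ℝ) : sigmoid s ≤ softplus s := by
  have h : sigmoid (-s) = (1 + exp s)⁻¹ := by rw [sigmoid_def, neg_neg]
  rw [softplus]
  linarith [sigmoid_neg s, one_sub_inv_le_log_of_pos (x := 1 + exp s) (by positivity)]

lemma sigmoid_mul_one_sub_le_quarter (s : ℝ) : sigmoid s * (1 - sigmoid s) ≤ 1 / 4 := by
  nlinarith [sq_nonneg (sigmoid s - 1 / 2)]

lemma sigmoid_mul_one_sub_le_softplus (s : ℝ) : sigmoid s * (1 - sigmoid s) ≤ softplus s :=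
  (mul_le_of_le_one_right (sigmoid_nonneg s) (by linarith [sigmoid_pos s])).trans
    (sigmoid_le_softplus s)

lemma abs_mul_sigmoid_mul_sub_le {c K a b : ℝ}
    (hK : ∀ s ∈ uIcc (c * a) (c * b), sigmoid s * (1 - sigmoid s) ≤ K) :
    |c * sigmoid (c * a) - c * sigmoid (c * b)| ≤ c ^ 2 * K * |a - b| := by
  have hderiv (t : ℝ) : HasDerivAt (fun t => c * sigmoid (c * t))
      (c ^ 2 * (sigmoid (c * t) * (1 - sigmoid (c * t)))) t := by
    refine (((hasDerivAt_sigmoid (c * t)).comp t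
      ((hasDerivAt_id t).const_mul c)).const_mul c).congr_deriv ?_
    ring
  have hbound (t : ℝ) (ht : t ∈ uIcc a b) :
      ‖c ^ 2 * (sigmoid (c * t) * (1 - sigmoid (c * t)))‖ ≤ c ^ 2 * K := by
    have hct : c * t ∈ uIcc (c * a) (c * b) := image_const_mul_uIcc c a b ▸ mem_image_of_mem _ ht
    rw [norm_mul, norm_pow, Real.norm_eq_abs, sq_abs, Real.norm_eq_abs,
      abs_of_nonneg (mul_nonneg (sigmoid_nonneg _) (by linarith [sigmoid_le_one (c * t)]))]
    exact mul_le_mul_of_nonneg_left (hK _ hct) (sq_nonneg c)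
  simpa [Real.norm_eq_abs] using
    (convex_uIcc a b).norm_image_sub_le_of_norm_hasDerivWithin_le
      (fun t _ => (hderiv t).hasDerivWithinAt) hbound right_mem_uIcc left_mem_uIcc

lemma EuclideanSpace.norm_le_mul_norm_of_abs_le {ι : Type*} [Fintype ι]
    {e a : EuclideanSpace ℝ ι} {K : ℝ} (hK : 0 ≤ K) (h : ∀ i, |e i| ≤ K * |a i|) :
    ‖e‖ ≤ K * ‖a‖ := by
  rw [← sq_le_sq₀ (norm_nonneg e) (by positivity), mul_pow, EuclideanSpace.real_norm_sq_eq,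
    EuclideanSpace.real_norm_sq_eq, Finset.mul_sum]
  refine Finset.sum_le_sum fun i _ => ?_
  rw [← sq_abs (e i), ← sq_abs (a i), ← mul_pow]
  exact pow_le_pow_left₀ (abs_nonneg _) (h i) 2

section GeneralizedLinear

variable {ι E : Type*} [Fintype ι] [NormedAddCommGroup E] [InnerProductSpace ℝ E]
  [CompleteSpace E]

lemma hasGradientAt_sum_comp_inner (x : ι → E) {φ φ' : ι → ℝ → ℝ}
    (hφ : ∀ i t, HasDerivAt (φ i) (φ' i t) t) (w : E) :
    HasGradientAt (fun w => ∑ i, φ i ⟪x i, w⟫) (∑ i, φ' i ⟪x i, w⟫ • x i) w := by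
  rw [hasGradientAt_iff_hasFDerivAt]
  refine (HasFDerivAt.fun_sum (u := Finset.univ) fun i _ =>
    (hφ i ⟪x i, w⟫).comp_hasFDerivAt w (innerSL ℝ (x i)).hasFDerivAt).congr_fderiv ?_
  ext z
  simp

lemma adjoint_apply_eq_sum_smul {x : ι → E} {X : E →L[ℝ] EuclideanSpace ℝ ι}
    (hX : ∀ w i, X w i = ⟪x i, w⟫) (e : EuclideanSpace ℝ ι) :
    X.adjoint e = ∑ i, e i • x i := by
  refine ext_inner_right ℝ fun z => ?_
  rw [ContinuousLinearMap.adjoint_inner_left, sum_inner, PiLp.inner_apply]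
  simp [hX, real_inner_smul_left, mul_comm]

lemma norm_sum_smul_sub_sum_smul_le {x : ι → E} {X : E →L[ℝ] EuclideanSpace ℝ ι}
    (hX : ∀ w i, X w i = ⟪x i, w⟫) {g : ι → ℝ → ℝ} {K : ℝ} (hK : 0 ≤ K) {u v : E}
    (hg : ∀ i, |g i ⟪x i, u⟫ - g i ⟪x i, v⟫| ≤ K * |⟪x i, u⟫ - ⟪x i, v⟫|) :
    ‖∑ i, g i ⟪x i, u⟫ • x i - ∑ i, g i ⟪x i, v⟫ • x i‖ ≤ K * ‖X‖ ^ 2 * ‖u - v‖ := by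
  set e : EuclideanSpace ℝ ι := WithLp.toLp 2 fun i => g i ⟪x i, u⟫ - g i ⟪x i, v⟫
  have he : ∑ i, g i ⟪x i, u⟫ • x i - ∑ i, g i ⟪x i, v⟫ • x i = X.adjoint e := by
    simp only [adjoint_apply_eq_sum_smul hX, e, sub_smul, Finset.sum_sub_distrib]
  have hXe : ‖e‖ ≤ K * ‖X (u - v)‖ :=
    EuclideanSpace.norm_le_mul_norm_of_abs_le hK fun i => by
      simpa [hX, inner_sub_right] using hg i
  calc ‖∑ i, g i ⟪x i, u⟫ • x i - ∑ i, g i ⟪x i, v⟫ • x i‖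
      ≤ ‖X.adjoint‖ * ‖e‖ := he ▸ X.adjoint.le_opNorm e
    _ ≤ ‖X‖ * (K * (‖X‖ * ‖u - v‖)) := by
      rw [LinearIsometryEquiv.norm_map]
      gcongr
      exact hXe.trans (by gcongr; exact X.le_opNorm _)
    _ = K * ‖X‖ ^ 2 * ‖u - v‖ := by ring

lemma norm_gradient_sum_comp_inner_sub_le {x : ι → E} {X : E →L[ℝ] EuclideanSpace ℝ ι}
    (hX : ∀ w i, X w i = ⟪x i, w⟫) {φ φ' : ι → ℝ → ℝ} (hφ : ∀ i t, HasDerivAt (φ i) (φ' i t) t)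
    {K : ℝ} (hK : 0 ≤ K) {u v : E}
    (hφ' : ∀ i, |φ' i ⟪x i, u⟫ - φ' i ⟪x i, v⟫| ≤ K * |⟪x i, u⟫ - ⟪x i, v⟫|) :
    ‖gradient (fun w => ∑ i, φ i ⟪x i, w⟫) u - gradient (fun w => ∑ i, φ i ⟪x i, w⟫) v‖ ≤
      K * ‖X‖ ^ 2 * ‖u - v‖ := by
  rw [(hasGradientAt_sum_comp_inner x hφ u).gradient,
    (hasGradientAt_sum_comp_inner x hφ v).gradient]
  exact norm_sum_smul_sub_sum_smul_le hX hK hφ'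

end GeneralizedLinear

section Logistic

variable {ι E : Type*} [Fintype ι] [NormedAddCommGroup E] [InnerProductSpace ℝ E]

noncomputable def logisticLoss (x : ι → E) (y : ι → ℝ) (w : E) : ℝ :=
  ∑ i, softplus (-y i * ⟪x i, w⟫)

lemma softplus_le_logisticLoss (x : ι → E) (y : ι → ℝ) (w : E) (i : ι) :
    softplus (-y i * ⟪x i, w⟫) ≤ logisticLoss x y w :=
  Finset.single_le_sum (f := fun j => softplus (-y j * ⟪x j, w⟫))
    (fun _ _ => softplus_nonneg _) (Finset.mem_univ i)

lemma logisticLoss_nonneg (x : ι → E) (y : ι → ℝ) (w : E) : 0 ≤ logisticLoss x y w :=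
  Finset.sum_nonneg fun _ _ => softplus_nonneg _

lemma norm_gradient_logisticLoss_sub_le [CompleteSpace E] {x : ι → E}
    {X : E →L[ℝ] EuclideanSpace ℝ ι} (hX : ∀ w i, X w i = ⟪x i, w⟫) {y : ι → ℝ}
    (hy : ∀ i, y i = 1 ∨ y i = -1) {K : ℝ} (hK : 0 ≤ K) {u v : E}
    (hσ : ∀ i, ∀ s ∈ uIcc (-y i * ⟪x i, u⟫) (-y i * ⟪x i, v⟫),
      sigmoid s * (1 - sigmoid s) ≤ K) :
    ‖gradient (logisticLoss x y) u - gradient (logisticLoss x y) v‖ ≤ K * ‖X‖ ^ 2 * ‖u - v‖ := by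
  have hderiv (i : ι) (t : ℝ) :
      HasDerivAt (fun t => softplus (-y i * t)) (-y i * sigmoid (-y i * t)) t := by
    refine ((hasDerivAt_softplus _).comp t ((hasDerivAt_id t).const_mul _)).congr_deriv ?_
    simp [mul_comm]
  refine norm_gradient_sum_comp_inner_sub_le hX hderiv hK fun i => ?_
  have hy2 : (-y i) ^ 2 = 1 := by rcases hy i with h | h <;> simp [h]
  simpa [hy2] using abs_mul_sigmoid_mul_sub_le (hσ i)

end Logistic

theorem logistic_regression_glocal_smooth_general {n d : ℕ}
    (x : Fin n → EuclideanSpace ℝ (Fin d)) (y : Fin n → ℝ)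
    (hy : ∀ i, y i = 1 ∨ y i = -1)
    (ℓ : EuclideanSpace ℝ (Fin d) → ℝ)
    (hℓ : ℓ = fun w => ∑ i, Real.log (1 + Real.exp (-(y i) * ⟪x i, w⟫)))
    (lstar : ℝ)
    (X : EuclideanSpace ℝ (Fin d) →L[ℝ] EuclideanSpace ℝ (Fin n))
    (hX : ∀ (w : EuclideanSpace ℝ (Fin d)) (i : Fin n), X w i = ⟪x i, w⟫) :
    (∀ u v, ‖gradient ℓ u - gradient ℓ v‖ ≤ 1 / 4 * ‖X‖ ^ 2 * ‖u - v‖) ∧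
    (∀ δ : ℝ, 0 < δ → ∀ u v, ℓ u - lstar ≤ δ → ℓ v - lstar ≤ δ →
      ‖gradient ℓ u - gradient ℓ v‖ ≤ (lstar + δ) * ‖X‖ ^ 2 * ‖u - v‖) := by
  obtain rfl : ℓ = logisticLoss x y := hℓ
  refine ⟨fun u v => norm_gradient_logisticLoss_sub_le hX hy (by norm_num)
    fun i s _ => sigmoid_mul_one_sub_le_quarter s, fun δ _ u v hu hv => ?_⟩
  refine norm_gradient_logisticLoss_sub_le hX hy
    ((logisticLoss_nonneg x y u).trans (by linarith)) fun i s hs => ?_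
  calc sigmoid s * (1 - sigmoid s) ≤ softplus s := sigmoid_mul_one_sub_le_softplus s
    _ ≤ max (softplus (-y i * ⟪x i, u⟫)) (softplus (-y i * ⟪x i, v⟫)) :=
      (softplus_monotone.mapsTo_uIcc hs).2
    _ ≤ lstar + δ := max_le (by linarith [softplus_le_logisticLoss x y u i])
      (by linarith [softplus_le_logisticLoss x y v i])

/-- The binary logistic regression loss is glocally
((1/4)‖X‖², (ℓ_* + δ)‖X‖², δ)-smooth for all δ > 0, where ‖X‖ is the spectral norm of
the data matrix (represented by the continuous linear map w ↦ (⟨x_i, w⟩)_i). -/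
theorem logistic_regression_glocal_smooth {n d : ℕ}
    (x : Fin n → EuclideanSpace ℝ (Fin d)) (y : Fin n → ℝ)
    (hy : ∀ i, y i = 1 ∨ y i = -1)
    (ℓ : EuclideanSpace ℝ (Fin d) → ℝ)
    (hℓ : ℓ = fun w => ∑ i, Real.log (1 + Real.exp (-(y i) * ⟪x i, w⟫)))
    (lstar : ℝ) (hlstar : IsGLB (Set.range ℓ) lstar)
    (X : EuclideanSpace ℝ (Fin d) →L[ℝ] EuclideanSpace ℝ (Fin n))
    (hX : ∀ (w : EuclideanSpace ℝ (Fin d)) (i : Fin n), X w i = ⟪x i, w⟫) :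
    (∀ u v, ‖gradient ℓ u - gradient ℓ v‖ ≤ 1 / 4 * ‖X‖ ^ 2 * ‖u - v‖) ∧
    (∀ δ : ℝ, 0 < δ → ∀ u v, ℓ u - lstar ≤ δ → ℓ v - lstar ≤ δ →
      ‖gradient ℓ u - gradient ℓ v‖ ≤ (lstar + δ) * ‖X‖ ^ 2 * ‖u - v‖) :=
  logistic_regression_glocal_smooth_general x y hy ℓ hℓ lstar X hX
end
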